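/- arXiv:2110.07779 — 3 statements merged into one kernel-verified Lean document; each statement's English description precedes it below -/
import Mathlib

section
/- Let n ≥ m ≥ 0 be integers, let p ≥ 1 be an integer and set c = 2p+1. Then r(S_c(n,m)) ≥ 2(n+m+p) − 1; equivalently, there exists a 2-coloring of the edges of the complete graph on 2(n+m+p) − 2 vertices containing no monochromatic copy of S_c(n,m). -/
open SimpleGraph

/-- The relation generating the edges of the linked double star `S_c(n,m)`:
vertices are `a_1, …, a_c` (the link, modelled by `Fin c`), the spokes
`v_1, …, v_n` of the `n`-star at `a_1` (modelled by `Fin n`), and the spokes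
`w_1, …, w_m` of the `m`-star at `a_c` (modelled by `Fin m`). -/
def ldsRel (c n m : ℕ) : (Fin c ⊕ Fin n ⊕ Fin m) → (Fin c ⊕ Fin n ⊕ Fin m) → Prop
  | Sum.inl i, Sum.inl j => (j : ℕ) = (i : ℕ) + 1
  | Sum.inl i, Sum.inr (Sum.inl _) => (i : ℕ) = 0
  | Sum.inl i, Sum.inr (Sum.inr _) => (i : ℕ) = c - 1
  | _, _ => False

/-- The linked double star `S_c(n,m)`. -/
def LinkedDoubleStar (c n m : ℕ) : SimpleGraph (Fin c ⊕ Fin n ⊕ Fin m) :=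
  SimpleGraph.fromRel (ldsRel c n m)

/-- `G` contains a (not necessarily induced) subgraph isomorphic to `H`. -/
def HasCopy {α β : Type*} (H : SimpleGraph α) (G : SimpleGraph β) : Prop :=
  ∃ f : α → β, Function.Injective f ∧ ∀ ⦃a b⦄, H.Adj a b → G.Adj (f a) (f b)

/-- A 2-coloring of the complete graph on `β` is encoded by the graph `G` of red
edges (so `Gᶜ` is the graph of blue edges).  `HasMonoLDS G c n m` says this
coloring contains a monochromatic copy of `S_c(n,m)`. -/
def HasMonoLDS {β : Type*} (G : SimpleGraph β) (c n m : ℕ) : Prop :=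
  HasCopy (LinkedDoubleStar c n m) G ∨ HasCopy (LinkedDoubleStar c n m) Gᶜ

/-- Every 2-coloring of the edges of `K_r` contains a monochromatic `S_c(n,m)`. -/
def IsRamseyLDS (c n m r : ℕ) : Prop :=
  ∀ G : SimpleGraph (Fin r), HasMonoLDS G c n m

/-- The Ramsey number of the linked double star `S_c(n,m)`: the least positive
`r` such that every 2-coloring of the edges of `K_r` contains a monochromatic
copy of `S_c(n,m)`. -/
noncomputable def ramseyLDS (c n m : ℕ) : ℕ :=
  sInf {r | 0 < r ∧ IsRamseyLDS c n m r}

/-- `f` exhibits a cycle on `L` vertices in `G` (the vertices `f 0, f 1, …`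
arranged cyclically, consecutive ones adjacent in `G`). -/
def IsCycleMap {β : Type*} {L : ℕ} (G : SimpleGraph β) (f : ZMod L → β) : Prop :=
  Function.Injective f ∧ ∀ i : ZMod L, G.Adj (f i) (f (i + 1))

/-- For a monochromatic cycle with vertex set `C`, all of whose edges have the
color given by the graph `H`, `cycStat H C` is the maximum over vertices
`z ∉ C` of the number of `H`-edges from `z` into `C` (denoted `s(C)`). -/
noncomputable def cycStat {β : Type*} (H : SimpleGraph β) (C : Set β) : ℕ :=
  sSup ((fun z => ({w ∈ C | H.Adj z w}).ncard) '' Cᶜ)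



open Finset in
lemma myRamseyClique {β : Type*} [DecidableEq β] (G : SimpleGraph β) :
    ∀ k s t : ℕ, s + t = k → ∀ A : Finset β, 2 ^ k ≤ A.card →
      (∃ B ⊆ A, B.card = s ∧ G.IsClique ↑B) ∨ (∃ B ⊆ A, B.card = t ∧ Gᶜ.IsClique ↑B) := by
  intro k
  induction k with
  | zero =>
    intro s t hst A hA
    left
    exact ⟨∅, Finset.empty_subset _, by simp; omega, by simp⟩
  | succ k ih =>
    intro s t hst A hA
    classical
    match s, t with
    | 0, t => exact Or.inl ⟨∅, Finset.empty_subset _, rfl, by simp⟩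
    | s+1, 0 => exact Or.inr ⟨∅, Finset.empty_subset _, rfl, by simp⟩
    | s+1, t+1 =>
      have hApos : 0 < A.card := lt_of_lt_of_le (Nat.two_pow_pos _) hA
      obtain ⟨v, hv⟩ := Finset.card_pos.mp hApos
      set R := (A.erase v).filter (fun u => G.Adj v u) with hR
      set Bl := (A.erase v).filter (fun u => ¬ G.Adj v u) with hBl
      have hsum : R.card + Bl.card = (A.erase v).card :=
        Finset.card_filter_add_card_filter_not _
      have herase : (A.erase v).card = A.card - 1 := Finset.card_erase_of_mem hv
      have hpow : 2 ^ (k+1) = 2^k + 2^k := by rw [pow_succ]; ring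
      have hcases : 2 ^ k ≤ R.card ∨ 2 ^ k ≤ Bl.card := by
        by_contra hc
        push_neg at hc
        have hk1 : 1 ≤ 2^k := Nat.one_le_two_pow
        omega
      rcases hcases with hRc | hBc
      · rcases ih s (t+1) (by omega) R hRc with ⟨B, hBR, hBcard, hBcl⟩ | ⟨B, hBR, hBcard, hBcl⟩
        · left
          have hvB : v ∉ B := fun h => (Finset.mem_erase.mp (Finset.mem_of_mem_filter _ (hBR h))).1 rfl
          refine ⟨insert v B, ?_, ?_, ?_⟩
          · exact Finset.insert_subset hv (hBR.trans ((Finset.filter_subset _ _).trans (Finset.erase_subset _ _)))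
          · rw [Finset.card_insert_of_notMem hvB, hBcard]
          · rw [Finset.coe_insert]
            exact hBcl.insert (fun b hb _ => (Finset.mem_filter.mp (hBR hb)).2)
        · right
          exact ⟨B, hBR.trans ((Finset.filter_subset _ _).trans (Finset.erase_subset _ _)), hBcard, hBcl⟩
      · rcases ih (s+1) t (by omega) Bl hBc with ⟨B, hBR, hBcard, hBcl⟩ | ⟨B, hBR, hBcard, hBcl⟩
        · left
          exact ⟨B, hBR.trans ((Finset.filter_subset _ _).trans (Finset.erase_subset _ _)), hBcard, hBcl⟩
        · right
          have hvB : v ∉ B := fun h => (Finset.mem_erase.mp (Finset.mem_of_mem_filter _ (hBR h))).1 rfl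
          refine ⟨insert v B, ?_, ?_, ?_⟩
          · exact Finset.insert_subset hv (hBR.trans ((Finset.filter_subset _ _).trans (Finset.erase_subset _ _)))
          · rw [Finset.card_insert_of_notMem hvB, hBcard]
          · rw [Finset.coe_insert]
            refine hBcl.insert (fun b hb hne => ?_)
            have hbB := Finset.mem_filter.mp (hBR hb)
            have hbv : b ≠ v := (Finset.mem_erase.mp hbB.1).1
            exact ⟨hbv.symm, hbB.2⟩

lemma copy_of_clique {c n m : ℕ} {β : Type*} (H : SimpleGraph β) (B : Finset β)
    (hB : B.card = c + (n + m)) (hcl : H.IsClique ↑B) :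
    HasCopy (LinkedDoubleStar c n m) H := by
  have hcard : Fintype.card (Fin c ⊕ Fin n ⊕ Fin m) = Fintype.card ↑B := by
    simp [Fintype.card_coe, hB]
  let e := Fintype.equivOfCardEq hcard
  refine ⟨fun x => (e x : β), Subtype.val_injective.comp e.injective, ?_⟩
  intro a b hab
  exact hcl (e a).2 (e b).2 (fun h => hab.ne (e.injective (Subtype.ext h)))


lemma exists_ramsey (c n m : ℕ) : IsRamseyLDS c n m (2 ^ ((c + (n+m)) + (c + (n+m)))) := by
  intro G0
  have h := myRamseyClique G0 ((c + (n+m)) + (c + (n+m))) (c + (n+m)) (c + (n+m)) rfl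
    Finset.univ (by rw [Finset.card_univ, Fintype.card_fin])
  rcases h with ⟨B, _, hBcard, hBcl⟩ | ⟨B, _, hBcard, hBcl⟩
  · exact Or.inl (copy_of_clique G0 B hBcard hBcl)
  · exact Or.inr (copy_of_clique G0ᶜ B hBcard hBcl)


lemma mono_comap {c n m r s : ℕ} (h : r ≤ s) (G : SimpleGraph (Fin s)) :
    HasMonoLDS (G.comap (Fin.castLE h)) c n m → HasMonoLDS G c n m := by
  rintro (⟨f, hf, hadj⟩ | ⟨f, hf, hadj⟩)
  · exact Or.inl ⟨Fin.castLE h ∘ f, (Fin.castLE_injective h).comp hf, fun a b hab => hadj hab⟩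
  · refine Or.inr ⟨Fin.castLE h ∘ f, (Fin.castLE_injective h).comp hf, fun a b hab => ?_⟩
    have := hadj hab
    rw [SimpleGraph.compl_adj] at this ⊢
    exact ⟨fun hc => this.1 (Fin.castLE_injective h hc), this.2⟩

lemma card_filter_fin_lt (K N : ℕ) (h : N ≤ K) :
    (Finset.univ.filter (fun v : Fin K => (v : ℕ) < N)).card = N := by
  have : Finset.univ.filter (fun v : Fin K => (v : ℕ) < N)
      = Finset.map ⟨Fin.castLE h, Fin.castLE_injective h⟩ Finset.univ := by
    ext v
    simp only [Finset.mem_filter, Finset.mem_univ, true_and, Finset.mem_map,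
      Function.Embedding.coeFn_mk]
    constructor
    · intro hv; exact ⟨⟨(v : ℕ), hv⟩, rfl⟩
    · rintro ⟨w, rfl⟩; exact w.isLt
  rw [this, Finset.card_map, Finset.card_univ, Fintype.card_fin]


section Counter
variable (n m p : ℕ)

/-- red: same side -/
def counterG (n m p : ℕ) : SimpleGraph (Fin (2 * (n + m + p) - 2)) :=
  SimpleGraph.fromRel (fun u v => ((u : ℕ) < n + m + p - 1 ↔ (v : ℕ) < n + m + p - 1))

lemma counterG_adj {u v : Fin (2 * (n + m + p) - 2)} (h : (counterG n m p).Adj u v) :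
    ((u : ℕ) < n + m + p - 1 ↔ (v : ℕ) < n + m + p - 1) := by
  rw [counterG, SimpleGraph.fromRel_adj] at h
  tauto

lemma counterG_compl_adj {u v : Fin (2 * (n + m + p) - 2)} (h : (counterG n m p)ᶜ.Adj u v) :
    ¬((u : ℕ) < n + m + p - 1 ↔ (v : ℕ) < n + m + p - 1) := by
  rw [SimpleGraph.compl_adj, counterG, SimpleGraph.fromRel_adj] at h
  tauto

lemma lds_adj {c N M : ℕ} {i j : Fin c} (h : (j : ℕ) = (i : ℕ) + 1) :
    (LinkedDoubleStar c N M).Adj (Sum.inl i) (Sum.inl j) := by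
  rw [LinkedDoubleStar, SimpleGraph.fromRel_adj]
  refine ⟨?_, Or.inl h⟩
  intro hcon
  rw [Sum.inl.injEq] at hcon
  subst hcon
  omega

lemma lds_adj_v {c N M : ℕ} {i : Fin c} {x : Fin N} (h : (i : ℕ) = 0) :
    (LinkedDoubleStar c N M).Adj (Sum.inl i) (Sum.inr (Sum.inl x)) := by
  rw [LinkedDoubleStar, SimpleGraph.fromRel_adj]
  exact ⟨by simp, Or.inl h⟩

lemma lds_adj_w {c N M : ℕ} {i : Fin c} {y : Fin M} (h : (i : ℕ) = c - 1) :
    (LinkedDoubleStar c N M).Adj (Sum.inl i) (Sum.inr (Sum.inr y)) := by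
  rw [LinkedDoubleStar, SimpleGraph.fromRel_adj]
  exact ⟨by simp, Or.inl h⟩

lemma counter_works (hp : 1 ≤ p) : ¬ HasMonoLDS (counterG n m p) (2 * p + 1) n m := by
  classical
  set c : ℕ := 2 * p + 1 with hc
  set N : ℕ := n + m + p - 1 with hN
  have hMN : 2 * (n + m + p) - 2 = 2 * N := by omega
  have hNle : N ≤ 2 * (n + m + p) - 2 := by omega
  have hcardU : Fintype.card (Fin (2 * (n + m + p) - 2)) = 2 * N := by
    rw [Fintype.card_fin, hMN]
  rintro (⟨f, hf, hadj⟩ | ⟨f, hf, hadj⟩)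
  · -- red copy: all vertices on one side
    have h0 : (0 : ℕ) < c := by omega
    set a0 : Fin c ⊕ Fin n ⊕ Fin m := Sum.inl ⟨0, h0⟩ with ha0
    set Q : Prop := ((f a0 : ℕ) < N) with hQ
    have claim : ∀ k, ∀ hk : k < c, (((f (Sum.inl ⟨k, hk⟩) : ℕ) < N) ↔ Q) := by
      intro k
      induction k with
      | zero => intro hk; exact Iff.rfl
      | succ k ih =>
        intro hk
        have hk' : k < c := by omega
        have hadj' := counterG_adj n m p (hadj (lds_adj (i := ⟨k, hk'⟩) (j := ⟨k+1, hk⟩) rfl))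
        exact hadj'.symm.trans (ih hk')
    have hmem : ∀ x, ((f x : ℕ) < N) ↔ Q := by
      rintro (i | x | y)
      · have := claim (i : ℕ) i.isLt
        simpa using this
      · have := counterG_adj n m p (hadj (lds_adj_v (i := (⟨0, h0⟩ : Fin c)) (x := x) rfl))
        tauto
      · have hcm : ((2 * p : ℕ)) < c := by omega
        have h1 := claim (2 * p) hcm
        have h2 := counterG_adj n m p
          (hadj (lds_adj_w (i := (⟨2 * p, hcm⟩ : Fin c)) (y := y) (by simp [hc])))
        tauto
    -- cardinality contradiction
    set P := Finset.univ.filter (fun v : Fin (2 * (n + m + p) - 2) => ((v : ℕ) < N) ↔ Q) with hP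
    have hPcard : P.card = N := by
      by_cases hq : Q
      · have hpos : P = Finset.univ.filter (fun v : Fin (2 * (n + m + p) - 2) => ((v : ℕ) < N)) := by
          ext v; simp [hP, hq]
        rw [hpos]
        exact card_filter_fin_lt _ _ hNle
      · have hneg : P = Finset.univ.filter (fun v : Fin (2 * (n + m + p) - 2) => ¬ ((v : ℕ) < N)) := by
          ext v; simp [hP, hq]
        have hsplit := Finset.card_filter_add_card_filter_not
          (s := (Finset.univ : Finset (Fin (2 * (n + m + p) - 2))))
          (p := fun v => (v : ℕ) < N)
        rw [Finset.card_univ, hcardU, card_filter_fin_lt _ _ hNle] at hsplit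
        rw [hneg]
        omega
    have himg : Finset.univ.image f ⊆ P := by
      intro v hv
      obtain ⟨x, _, rfl⟩ := Finset.mem_image.mp hv
      simp only [hP, Finset.mem_filter, Finset.mem_univ, true_and]
      exact hmem x
    have hcard := Finset.card_le_card himg
    rw [Finset.card_image_of_injective _ hf, Finset.card_univ] at hcard
    simp only [Fintype.card_sum, Fintype.card_fin] at hcard
    omega
  · -- blue copy: bipartite-like structure
    have h0 : (0 : ℕ) < c := by omega
    set a0 : Fin c ⊕ Fin n ⊕ Fin m := Sum.inl ⟨0, h0⟩ with ha0
    set Q : Prop := ((f a0 : ℕ) < N) with hQ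
    have claim : ∀ k, ∀ hk : k < c, (((f (Sum.inl ⟨k, hk⟩) : ℕ) < N) ↔ (Q ↔ Even k)) := by
      intro k
      induction k with
      | zero =>
        intro hk
        simp only [Even.zero, iff_true]
        exact Iff.rfl
      | succ k ih =>
        intro hk
        have hk' : k < c := by omega
        have hadj' := counterG_compl_adj n m p (hadj (lds_adj (i := ⟨k, hk'⟩) (j := ⟨k+1, hk⟩) rfl))
        have hih := ih hk'
        have hev : Even (k + 1) ↔ ¬ Even k := Nat.even_add_one
        tauto
    -- injection from Fin p ⊕ Fin n ⊕ Fin m into the opposite side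
    set P := Finset.univ.filter
      (fun v : Fin (2 * (n + m + p) - 2) => ¬ (((v : ℕ) < N) ↔ Q)) with hP
    have hPcard : P.card = N := by
      have hsplit := Finset.card_filter_add_card_filter_not
        (s := (Finset.univ : Finset (Fin (2 * (n + m + p) - 2))))
        (p := fun v => (v : ℕ) < N)
      rw [Finset.card_univ, hcardU, card_filter_fin_lt _ _ hNle] at hsplit
      by_cases hq : Q
      · have hneg : P = Finset.univ.filter (fun v : Fin (2 * (n + m + p) - 2) => ¬ ((v : ℕ) < N)) := by
          ext v; simp [hP, hq]
        rw [hneg]; omega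
      · have hneg : P = Finset.univ.filter (fun v : Fin (2 * (n + m + p) - 2) => ((v : ℕ) < N)) := by
          ext v; simp [hP, hq]
        rw [hneg, card_filter_fin_lt _ _ hNle]
    set h : Fin p ⊕ Fin n ⊕ Fin m → Fin c ⊕ Fin n ⊕ Fin m :=
      Sum.elim (fun i => Sum.inl ⟨2 * (i : ℕ) + 1, by omega⟩) Sum.inr with hh
    have hinj : Function.Injective h := by
      rintro (x | x) (y | y) hxy
      · simp only [hh, Sum.elim_inl, Sum.inl.injEq, Fin.mk.injEq] at hxy
        exact congrArg Sum.inl (Fin.ext (by omega))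
      · exact absurd hxy (by simp [hh])
      · exact absurd hxy (by simp [hh])
      · simpa [hh] using hxy
    have hmem : ∀ x, ¬ (((f (h x) : ℕ) < N) ↔ Q) := by
      rintro (i | x | y)
      · have hlt : 2 * (i : ℕ) + 1 < c := by omega
        have h1 := claim (2 * (i : ℕ) + 1) hlt
        have hodd : ¬ Even (2 * (i : ℕ) + 1) := by simp [Nat.even_add_one, Nat.even_mul]
        simp only [hh, Sum.elim_inl]
        tauto
      · have := counterG_compl_adj n m p (hadj (lds_adj_v (i := (⟨0, h0⟩ : Fin c)) (x := x) rfl))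
        simp only [hh, Sum.elim_inr]
        tauto
      · have hcm : ((2 * p : ℕ)) < c := by omega
        have h1 := claim (2 * p) hcm
        have hev : Even (2 * p) := even_two_mul p
        have h2 := counterG_compl_adj n m p
          (hadj (lds_adj_w (i := (⟨2 * p, hcm⟩ : Fin c)) (y := y) (by simp [hc])))
        simp only [hh, Sum.elim_inr]
        tauto
    have himg : Finset.univ.image (f ∘ h) ⊆ P := by
      intro v hv
      obtain ⟨x, _, rfl⟩ := Finset.mem_image.mp hv
      simp only [hP, Finset.mem_filter, Finset.mem_univ, true_and]
      exact hmem x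
    have hcard := Finset.card_le_card himg
    rw [Finset.card_image_of_injective _ (hf.comp hinj), Finset.card_univ] at hcard
    simp only [Fintype.card_sum, Fintype.card_fin] at hcard
    omega

end Counter


/-- `r(S_c(n,m)) ≥ 2(n+m+p) − 1`; equivalently, there is a
2-coloring of `K_{2(n+m+p)−2}` with no monochromatic `S_c(n,m)`. -/
theorem lds_lower_bound_one (n m p : ℕ) (hmn : m ≤ n) (hp : 1 ≤ p) :
    2 * (n + m + p) - 1 ≤ ramseyLDS (2 * p + 1) n m ∧
    ∃ G : SimpleGraph (Fin (2 * (n + m + p) - 2)), ¬ HasMonoLDS G (2 * p + 1) n m := by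
  have hcounter := counter_works n m p hp
  constructor
  · apply le_csInf
    · exact ⟨2 ^ (((2 * p + 1) + (n + m)) + ((2 * p + 1) + (n + m))),
        Nat.two_pow_pos _, exists_ramsey _ _ _⟩
    · rintro r ⟨hrpos, hram⟩
      by_contra hlt
      push_neg at hlt
      have hr : r ≤ 2 * (n + m + p) - 2 := by omega
      exact hcounter (mono_comap hr (counterG n m p) (hram _))
  · exact ⟨counterG n m p, hcounter⟩
end

section
/- Let n ≥ m ≥ 1 and p ≥ 1 be integers with n ≥ p + 1, and set c = 2p+1. Consider a 2-coloring of the edges of the complete graph on a vertex set V with |V| = 2(n+m+p) − 1, and suppose u ∈ V satisfies red-d(u) ≥ red-d(v) and red-d(u) ≥ blue-d(v) for all v ∈ V, and red-d(u) ≥ n + m + 2p. If there is a red cycle on 2p vertices all of whose vertices lie in R(u), then the coloring contains a monochromatic copy of S_c(n,m). -/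
open SimpleGraph

lemma hasCopy_of_path {V : Type*} (H : SimpleGraph V) (c n m : ℕ) (hc : 0 < c)
    (a : Fin c → V) (ha : Function.Injective a)
    (hadj : ∀ (i : Fin c) (h : (i : ℕ) + 1 < c), H.Adj (a i) (a ⟨(i : ℕ) + 1, h⟩))
    (Ln Lm : Finset V) (hLn : Ln.card = n) (hLm : Lm.card = m)
    (hdLn : ∀ i : Fin c, a i ∉ Ln) (hdLm : ∀ i : Fin c, a i ∉ Lm)
    (hdisj : Disjoint Ln Lm)
    (hadj0 : ∀ x ∈ Ln, H.Adj (a ⟨0, hc⟩) x)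
    (hadjc : ∀ x ∈ Lm, H.Adj (a ⟨c - 1, Nat.sub_lt hc Nat.one_pos⟩) x) :
    HasCopy (LinkedDoubleStar c n m) H := by
  set gn : Fin n → V := fun i => (Ln.equivFin.symm (finCongr hLn.symm i) : V) with hgn
  set gm : Fin m → V := fun i => (Lm.equivFin.symm (finCongr hLm.symm i) : V) with hgm
  have hgnmem : ∀ i, gn i ∈ Ln := fun i => (Ln.equivFin.symm (finCongr hLn.symm i)).2
  have hgmmem : ∀ i, gm i ∈ Lm := fun i => (Lm.equivFin.symm (finCongr hLm.symm i)).2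
  have hgninj : Function.Injective gn := by
    intro i j hij
    have h1 := Subtype.ext hij
    have h2 := Ln.equivFin.symm.injective h1
    exact (finCongr hLn.symm).injective h2
  have hgminj : Function.Injective gm := by
    intro i j hij
    have h1 := Subtype.ext hij
    have h2 := Lm.equivFin.symm.injective h1
    exact (finCongr hLm.symm).injective h2
  refine ⟨Sum.elim a (Sum.elim gn gm), ?_, ?_⟩
  · rintro (i | v | w) (j | v' | w') hxy <;>
      simp only [Sum.elim_inl, Sum.elim_inr] at hxy
    · rw [ha hxy]
    · exact absurd (hxy ▸ hgnmem v') (hdLn i)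
    · exact absurd (hxy ▸ hgmmem w') (hdLm i)
    · exact absurd (hxy.symm ▸ hgnmem v) (hdLn j)
    · rw [hgninj hxy]
    · exact absurd (Finset.disjoint_left.mp hdisj (hxy ▸ hgnmem v) (hgmmem w')) id
    · exact absurd (hxy.symm ▸ hgmmem w) (hdLm j)
    · exact absurd (Finset.disjoint_left.mp hdisj (hgnmem v') (hxy ▸ hgmmem w)) id
    · rw [hgminj hxy]
  · rintro (i | v | w) (j | v' | w') hxy <;>
      rw [LinkedDoubleStar, SimpleGraph.fromRel_adj] at hxy <;>
      obtain ⟨hne, h | h⟩ := hxy <;>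
      simp only [ldsRel] at h <;>
      simp only [Sum.elim_inl, Sum.elim_inr]
    · -- inl i, inl j, h : (j:ℕ) = i + 1
      have hlt : (i : ℕ) + 1 < c := h ▸ j.isLt
      have hj : j = ⟨(i : ℕ) + 1, hlt⟩ := Fin.ext h
      rw [hj]; exact hadj i hlt
    · -- inl i, inl j, h : (i:ℕ) = j + 1
      have hlt : (j : ℕ) + 1 < c := h ▸ i.isLt
      have hi : i = ⟨(j : ℕ) + 1, hlt⟩ := Fin.ext h
      rw [hi]; exact (hadj j hlt).symm
    · -- inl i, inr inl v', h : (i:ℕ) = 0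
      have hi : i = ⟨0, hc⟩ := Fin.ext h
      rw [hi]; exact hadj0 _ (hgnmem v')
    · -- inl i, inr inr w', h : (i:ℕ) = c - 1
      have hi : i = ⟨c - 1, Nat.sub_lt hc Nat.one_pos⟩ := Fin.ext h
      rw [hi]; exact hadjc _ (hgmmem w')
    · -- inr inl v, inl j : (j:ℕ) = 0
      have hj : j = ⟨0, hc⟩ := Fin.ext h
      rw [hj]; exact (hadj0 _ (hgnmem v)).symm
    · -- inr inr w, inl j : (j:ℕ) = c-1
      have hj : j = ⟨c - 1, Nat.sub_lt hc Nat.one_pos⟩ := Fin.ext h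
      rw [hj]; exact (hadjc _ (hgmmem w)).symm

/-- no red cycle of length `2p` inside `R(u)`, where `u` has maximum
monochromatic degree and `red-d(u) ≥ n + m + 2p`. -/
theorem lds_no_red_cycle (n m p : ℕ) (hm : 1 ≤ m) (hmn : m ≤ n) (hp : 1 ≤ p)
    (hn : p + 1 ≤ n) {V : Type*} [Fintype V]
    (hV : Fintype.card V = 2 * (n + m + p) - 1) (G : SimpleGraph V) (u : V)
    (hmaxr : ∀ v : V, ({w | G.Adj v w}).ncard ≤ ({w | G.Adj u w}).ncard)
    (hmaxb : ∀ v : V, ({w | Gᶜ.Adj v w}).ncard ≤ ({w | G.Adj u w}).ncard)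
    (hdu : n + m + 2 * p ≤ ({w | G.Adj u w}).ncard)
    (f : ZMod (2 * p) → V) (hf : IsCycleMap G f) (hfR : ∀ i, G.Adj u (f i)) :
    HasMonoLDS G (2 * p + 1) n m := by
  classical
  haveI : NeZero (2 * p) := ⟨by omega⟩
  obtain ⟨hfinj, hfcyc⟩ := hf
  -- cast injectivity helpers
  have castinj : ∀ x y : ℕ, x < 2 * p → y < 2 * p →
      ((x : ZMod (2 * p)) = (y : ZMod (2 * p))) → x = y := by
    intro x y hx hy hxy
    have h := congrArg ZMod.val hxy
    rwa [ZMod.val_cast_of_lt hx, ZMod.val_cast_of_lt hy] at h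
  have castinj1 : ∀ x y : ℕ, 1 ≤ x → x ≤ 2 * p → 1 ≤ y → y ≤ 2 * p →
      ((x : ZMod (2 * p)) = (y : ZMod (2 * p))) → x = y := by
    intro x y hx1 hx2 hy1 hy2 hxy
    rcases eq_or_lt_of_le hx2 with hx | hx <;> rcases eq_or_lt_of_le hy2 with hy | hy
    · omega
    · exfalso
      rw [hx, ZMod.natCast_self] at hxy
      have h := congrArg ZMod.val hxy
      rw [ZMod.val_zero, ZMod.val_cast_of_lt hy] at h
      omega
    · exfalso
      rw [hy, ZMod.natCast_self] at hxy
      have h := congrArg ZMod.val hxy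
      rw [ZMod.val_zero, ZMod.val_cast_of_lt hx] at h
      omega
    · exact castinj x y hx hy hxy
  -- finset red neighborhoods
  set R : V → Finset V := fun v => Finset.univ.filter (fun w => G.Adj v w) with hRdef
  have hdu' : n + m + 2 * p ≤ (R u).card := by
    have : ({w | G.Adj u w}).ncard = (R u).card := by
      rw [← Set.ncard_coe_finset]
      congr 1
      ext w
      simp [hRdef]
    rwa [this] at hdu
  set C : Finset V := Finset.univ.image f with hCdef
  have hfC : ∀ i, f i ∈ C := fun i => Finset.mem_image_of_mem f (Finset.mem_univ i)
  have hCcard : C.card = 2 * p := by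
    rw [hCdef, Finset.card_image_of_injective _ hfinj, Finset.card_univ, ZMod.card]
  have hune : ∀ i, u ≠ f i := fun i => (hfR i).ne
  have huC : u ∉ C := by
    simp only [hCdef, Finset.mem_image]
    rintro ⟨i, -, hi⟩
    exact hune i hi.symm
  set D : Finset V := insert u C with hDdef
  have hDcard : D.card = 2 * p + 1 := by
    rw [hDdef, Finset.card_insert_of_notMem huC, hCcard]
  set Out : Finset V := Finset.univ \ D with hOutdef
  have hOutcard : Out.card = 2 * n + 2 * m - 2 := by
    rw [hOutdef, Finset.card_sdiff_of_subset (Finset.subset_univ D), Finset.card_univ, hV, hDcard]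
    omega
  have hOutD : ∀ x ∈ Out, x ∉ D := by
    intro x hx
    exact (Finset.mem_sdiff.mp hx).2
  have hCD : ∀ x ∈ C, x ∈ D := fun x hx => Finset.mem_insert_of_mem hx
  by_cases hred : ∃ j : ZMod (2 * p), m ≤ ((R (f j)) ∩ Out).card
  · -- RED CASE
    obtain ⟨j, hj⟩ := hred
    obtain ⟨Lm, hLmsub, hLmcard⟩ := Finset.exists_subset_card_eq hj
    have hLnbound : n ≤ ((R u) \ (C ∪ Lm)).card := by
      have h1 := Finset.le_card_sdiff (C ∪ Lm) (R u)
      have h2 : (C ∪ Lm).card ≤ 2 * p + m :=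
        le_trans (Finset.card_union_le _ _) (by rw [hCcard, hLmcard])
      omega
    obtain ⟨Ln, hLnsub, hLncard⟩ := Finset.exists_subset_card_eq hLnbound
    set a : Fin (2 * p + 1) → V :=
      fun i => if (i : ℕ) = 0 then u else f (j + ((i : ℕ) : ZMod (2 * p))) with ha
    have haeval0 : ∀ (i : Fin (2 * p + 1)), (i : ℕ) = 0 → a i = u := by
      intro i hi
      simp only [ha]
      rw [if_pos hi]
    have haeval1 : ∀ (i : Fin (2 * p + 1)), (i : ℕ) ≠ 0 →
        a i = f (j + ((i : ℕ) : ZMod (2 * p))) := by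
      intro i hi
      simp only [ha]
      rw [if_neg hi]
    have hainj : Function.Injective a := by
      intro i i' hii
      by_cases h0 : (i : ℕ) = 0 <;> by_cases h0' : (i' : ℕ) = 0
      · exact Fin.ext (by omega)
      · rw [haeval0 i h0, haeval1 i' h0'] at hii
        exact absurd hii (hune _)
      · rw [haeval1 i h0, haeval0 i' h0'] at hii
        exact absurd hii.symm (hune _)
      · rw [haeval1 i h0, haeval1 i' h0'] at hii
        have h1 := hfinj hii
        have h2 : ((i : ℕ) : ZMod (2 * p)) = ((i' : ℕ) : ZMod (2 * p)) :=
          add_left_cancel h1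
        have h3 : (i : ℕ) = (i' : ℕ) := by
          have hi := i.isLt
          have hi' := i'.isLt
          exact castinj1 _ _ (by omega) (by omega) (by omega) (by omega) h2
        exact Fin.ext h3
    have hadjpath : ∀ (i : Fin (2 * p + 1)) (h : (i : ℕ) + 1 < 2 * p + 1),
        G.Adj (a i) (a ⟨(i : ℕ) + 1, h⟩) := by
      intro i h
      have hv : ((⟨(i : ℕ) + 1, h⟩ : Fin (2 * p + 1)) : ℕ) = (i : ℕ) + 1 := rfl
      by_cases h0 : (i : ℕ) = 0
      · rw [haeval0 i h0, haeval1 _ (by rw [hv]; omega)]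
        rw [hv, h0]
        norm_num
        exact hfR (j + 1)
      · rw [haeval1 i h0, haeval1 _ (by rw [hv]; omega)]
        rw [hv]
        push_cast
        rw [← add_assoc]
        exact hfcyc (j + ((i : ℕ) : ZMod (2 * p)))
    have havalues : ∀ i : Fin (2 * p + 1), a i = u ∨ a i ∈ C := by
      intro i
      by_cases h0 : (i : ℕ) = 0
      · left; exact haeval0 i h0
      · right; rw [haeval1 i h0]; exact hfC _
    have hLmOut : ∀ x ∈ Lm, x ∈ Out := by
      intro x hx
      exact (Finset.mem_inter.mp (hLmsub hx)).2
    have hLmR : ∀ x ∈ Lm, G.Adj (f j) x := by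
      intro x hx
      have := (Finset.mem_inter.mp (hLmsub hx)).1
      exact (Finset.mem_filter.mp this).2
    have hLnR : ∀ x ∈ Ln, G.Adj u x := by
      intro x hx
      have := (Finset.mem_sdiff.mp (hLnsub hx)).1
      exact (Finset.mem_filter.mp this).2
    have hdLn : ∀ i : Fin (2 * p + 1), a i ∉ Ln := by
      intro i hmem
      obtain ⟨hxR, hxn⟩ := Finset.mem_sdiff.mp (hLnsub hmem)
      rcases havalues i with hval | hval
      · rw [hval] at hxR
        exact G.irrefl (Finset.mem_filter.mp hxR).2
      · exact hxn (Finset.mem_union_left _ hval)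
    have hdLm : ∀ i : Fin (2 * p + 1), a i ∉ Lm := by
      intro i hmem
      have hout := hLmOut _ hmem
      rcases havalues i with hval | hval
      · exact hOutD _ hout (hval ▸ Finset.mem_insert_self u C)
      · exact hOutD _ hout (hCD _ hval)
    have hdisjnm : Disjoint Ln Lm := by
      rw [Finset.disjoint_left]
      intro x hx
      have := (Finset.mem_sdiff.mp (hLnsub hx)).2
      intro hx'
      exact this (Finset.mem_union_right _ hx')
    left
    refine hasCopy_of_path G (2 * p + 1) n m (by omega) a hainj hadjpath Ln Lm hLncard
      hLmcard hdLn hdLm hdisjnm ?_ ?_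
    · intro x hx
      rw [haeval0 _ rfl]
      exact hLnR x hx
    · intro x hx
      have hval : ((⟨2 * p + 1 - 1, Nat.sub_lt (by omega) Nat.one_pos⟩ :
          Fin (2 * p + 1)) : ℕ) = 2 * p := rfl
      rw [haeval1 _ (by rw [hval]; omega), hval, ZMod.natCast_self, add_zero]
      exact hLmR x hx
  · -- BLUE CASE
    push_neg at hred
    set OutB : ZMod (2 * p) → Finset V :=
      fun j => Out.filter (fun x => Gᶜ.Adj (f j) x) with hOutBdef
    have hOutBsub : ∀ j, OutB j ⊆ Out := fun j => Finset.filter_subset _ _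
    have hOutBadj : ∀ j, ∀ x ∈ OutB j, Gᶜ.Adj (f j) x := by
      intro j x hx
      exact (Finset.mem_filter.mp hx).2
    have hOutBcard : ∀ j, 2 * n + m - 1 ≤ (OutB j).card := by
      intro j
      have hsp : OutB j = Out \ (R (f j) ∩ Out) := by
        ext x
        simp only [hOutBdef, Finset.mem_filter, Finset.mem_sdiff, Finset.mem_inter, hRdef,
          Finset.mem_filter, Finset.mem_univ, true_and, compl_adj]
        constructor
        · rintro ⟨hxo, -, hna⟩
          exact ⟨hxo, fun hh => hna hh.1⟩
        · rintro ⟨hxo, hna⟩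
          refine ⟨hxo, ?_, fun hh => hna ⟨hh, hxo⟩⟩
          intro heq
          exact hOutD x hxo (hCD _ (heq ▸ hfC j))
      have hsub : (R (f j) ∩ Out) ⊆ Out := Finset.inter_subset_right
      have hcd : (OutB j).card = Out.card - (R (f j) ∩ Out).card := by
        rw [hsp, Finset.card_sdiff_of_subset hsub]
      have := hred j
      omega
    set A : Fin p → Finset V :=
      fun k => OutB (((k : ℕ) : ZMod (2 * p))) ∩ OutB ((((k : ℕ) + 1 : ℕ) : ZMod (2 * p)))
      with hAdef
    have hAcard : ∀ k, p ≤ (A k).card := by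
      intro k
      have h1 := hOutBcard (((k : ℕ) : ZMod (2 * p)))
      have h2 := hOutBcard ((((k : ℕ) + 1 : ℕ) : ZMod (2 * p)))
      have h3 : (OutB (((k : ℕ) : ZMod (2 * p))) ∪
          OutB ((((k : ℕ) + 1 : ℕ) : ZMod (2 * p)))).card ≤ Out.card :=
        Finset.card_le_card (Finset.union_subset (hOutBsub _) (hOutBsub _))
      have h4 := Finset.card_union_add_card_inter (OutB (((k : ℕ) : ZMod (2 * p))))
        (OutB ((((k : ℕ) + 1 : ℕ) : ZMod (2 * p))))
      simp only [hAdef]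
      omega
    obtain ⟨w, hwinj, hwmem⟩ :=
      (Finset.all_card_le_biUnion_card_iff_exists_injective A).mp (by
        intro s
        rcases Finset.eq_empty_or_nonempty s with rfl | ⟨k, hk⟩
        · simp
        · calc s.card ≤ Finset.univ.card := Finset.card_le_univ s
            _ = p := by rw [Finset.card_univ, Fintype.card_fin]
            _ ≤ (A k).card := hAcard k
            _ ≤ (s.biUnion A).card :=
              Finset.card_le_card (Finset.subset_biUnion_of_mem A hk))
    have hwOut : ∀ k, w k ∈ Out := fun k =>
      hOutBsub _ (Finset.mem_inter.mp (hwmem k)).1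
    have hwB1 : ∀ k : Fin p, Gᶜ.Adj (f (((k : ℕ) : ZMod (2 * p)))) (w k) := fun k =>
      hOutBadj _ _ (Finset.mem_inter.mp (hwmem k)).1
    have hwB2 : ∀ k : Fin p, Gᶜ.Adj (f ((((k : ℕ) + 1 : ℕ) : ZMod (2 * p)))) (w k) := fun k =>
      hOutBadj _ _ (Finset.mem_inter.mp (hwmem k)).2
    set wimg : Finset V := Finset.univ.image w with hwimgdef
    have hwimgcard : wimg.card ≤ p := by
      calc wimg.card ≤ Finset.univ.card := Finset.card_image_le
        _ = p := by rw [Finset.card_univ, Fintype.card_fin]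
    have hLmbound : m ≤ ((OutB (((p : ℕ) : ZMod (2 * p)))) \ wimg).card := by
      have h1 := Finset.le_card_sdiff wimg (OutB (((p : ℕ) : ZMod (2 * p))))
      have h2 := hOutBcard (((p : ℕ) : ZMod (2 * p)))
      omega
    obtain ⟨Lm, hLmsub, hLmcard⟩ := Finset.exists_subset_card_eq hLmbound
    have hLnbound : n ≤ (((OutB (((0 : ℕ) : ZMod (2 * p)))) \ wimg) \ Lm).card := by
      have h1 := Finset.le_card_sdiff wimg (OutB (((0 : ℕ) : ZMod (2 * p))))
      have h2 := Finset.le_card_sdiff Lm ((OutB (((0 : ℕ) : ZMod (2 * p)))) \ wimg)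
      have h3 := hOutBcard (((0 : ℕ) : ZMod (2 * p)))
      omega
    obtain ⟨Ln, hLnsub, hLncard⟩ := Finset.exists_subset_card_eq hLnbound
    set a : Fin (2 * p + 1) → V := fun i =>
      if h2 : (i : ℕ) % 2 = 0 then f ((((i : ℕ) / 2 : ℕ)) : ZMod (2 * p))
      else w ⟨(i : ℕ) / 2, by have := i.isLt; omega⟩ with ha
    have haeven : ∀ (i : Fin (2 * p + 1)), (i : ℕ) % 2 = 0 →
        a i = f ((((i : ℕ) / 2 : ℕ)) : ZMod (2 * p)) := by
      intro i hi
      simp only [ha]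
      rw [dif_pos hi]
    have haodd : ∀ (i : Fin (2 * p + 1)) (hi : ¬((i : ℕ) % 2 = 0)),
        a i = w ⟨(i : ℕ) / 2, by have := i.isLt; omega⟩ := by
      intro i hi
      simp only [ha]
      rw [dif_neg hi]
    have hainj : Function.Injective a := by
      intro i i' hii
      by_cases e1 : (i : ℕ) % 2 = 0 <;> by_cases e2 : (i' : ℕ) % 2 = 0
      · rw [haeven i e1, haeven i' e2] at hii
        have h1 := hfinj hii
        have hiv := i.isLt
        have hiv' := i'.isLt
        have h2 : (i : ℕ) / 2 = (i' : ℕ) / 2 := castinj _ _ (by omega) (by omega) h1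
        exact Fin.ext (by omega)
      · rw [haeven i e1, haodd i' e2] at hii
        exfalso
        have hout := hwOut ⟨(i' : ℕ) / 2, by have := i'.isLt; omega⟩
        rw [← hii] at hout
        exact hOutD _ hout (hCD _ (hfC _))
      · rw [haodd i e1, haeven i' e2] at hii
        exfalso
        have hout := hwOut ⟨(i : ℕ) / 2, by have := i.isLt; omega⟩
        rw [hii] at hout
        exact hOutD _ hout (hCD _ (hfC _))
      · rw [haodd i e1, haodd i' e2] at hii
        have h1 := hwinj hii
        have h2 : (i : ℕ) / 2 = (i' : ℕ) / 2 := by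
          have := congrArg Fin.val h1
          simpa using this
        exact Fin.ext (by omega)
    have hadjpath : ∀ (i : Fin (2 * p + 1)) (h : (i : ℕ) + 1 < 2 * p + 1),
        Gᶜ.Adj (a i) (a ⟨(i : ℕ) + 1, h⟩) := by
      intro i h
      have hv : ((⟨(i : ℕ) + 1, h⟩ : Fin (2 * p + 1)) : ℕ) = (i : ℕ) + 1 := rfl
      by_cases e1 : (i : ℕ) % 2 = 0
      · have e3 : a ⟨(i : ℕ) + 1, h⟩ = w ⟨(i : ℕ) / 2, by omega⟩ := by
          rw [haodd _ (by rw [hv]; omega)]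
          congr 1
          exact Fin.ext (show ((i : ℕ) + 1) / 2 = (i : ℕ) / 2 from by omega)
        rw [haeven i e1, e3]
        exact hwB1 ⟨(i : ℕ) / 2, by omega⟩
      · have e3 : a ⟨(i : ℕ) + 1, h⟩ = f ((((i : ℕ) / 2 + 1 : ℕ)) : ZMod (2 * p)) := by
          rw [haeven _ (by rw [hv]; omega)]
          congr 1
          exact congrArg (fun t : ℕ => (t : ZMod (2 * p)))
            (show ((i : ℕ) + 1) / 2 = (i : ℕ) / 2 + 1 from by omega)
        rw [haodd i e1, e3]
        exact (hwB2 ⟨(i : ℕ) / 2, by have := i.isLt; omega⟩).symm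
    have havalues : ∀ i : Fin (2 * p + 1), a i ∈ C ∨ a i ∈ wimg := by
      intro i
      by_cases e : (i : ℕ) % 2 = 0
      · left; rw [haeven i e]; exact hfC _
      · right; rw [haodd i e]; exact Finset.mem_image_of_mem w (Finset.mem_univ _)
    have hLnmem : ∀ x ∈ Ln, x ∈ OutB (((0 : ℕ) : ZMod (2 * p))) ∧ x ∉ wimg ∧ x ∉ Lm := by
      intro x hx
      have h1 := Finset.mem_sdiff.mp (hLnsub hx)
      have h2 := Finset.mem_sdiff.mp h1.1
      exact ⟨h2.1, h2.2, h1.2⟩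
    have hLmmem : ∀ x ∈ Lm, x ∈ OutB (((p : ℕ) : ZMod (2 * p))) ∧ x ∉ wimg := by
      intro x hx
      have h1 := Finset.mem_sdiff.mp (hLmsub hx)
      exact ⟨h1.1, h1.2⟩
    have hdLn : ∀ i : Fin (2 * p + 1), a i ∉ Ln := by
      intro i hmem
      obtain ⟨hB, hw, hLm'⟩ := hLnmem _ hmem
      have hout : a i ∈ Out := hOutBsub _ hB
      rcases havalues i with hval | hval
      · exact hOutD _ hout (hCD _ hval)
      · exact hw hval
    have hdLm : ∀ i : Fin (2 * p + 1), a i ∉ Lm := by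
      intro i hmem
      obtain ⟨hB, hw⟩ := hLmmem _ hmem
      have hout : a i ∈ Out := hOutBsub _ hB
      rcases havalues i with hval | hval
      · exact hOutD _ hout (hCD _ hval)
      · exact hw hval
    have hdisjnm : Disjoint Ln Lm := by
      rw [Finset.disjoint_left]
      intro x hx
      exact (hLnmem _ hx).2.2
    right
    refine hasCopy_of_path Gᶜ (2 * p + 1) n m (by omega) a hainj hadjpath Ln Lm hLncard
      hLmcard hdLn hdLm hdisjnm ?_ ?_
    · intro x hx
      have h0 : a ⟨0, by omega⟩ = f (((0 : ℕ) : ZMod (2 * p))) := by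
        rw [haeven ⟨0, by omega⟩ (by norm_num)]
        congr 1
        exact congrArg (fun t : ℕ => (t : ZMod (2 * p)))
          (show (0 : ℕ) / 2 = 0 from by omega)
      rw [h0]
      exact hOutBadj _ _ (hLnmem _ hx).1
    · intro x hx
      have hvc : ((⟨2 * p + 1 - 1, Nat.sub_lt (by omega) Nat.one_pos⟩ :
          Fin (2 * p + 1)) : ℕ) = 2 * p := rfl
      have hc0 : a ⟨2 * p + 1 - 1, Nat.sub_lt (by omega) Nat.one_pos⟩ =
          f (((p : ℕ) : ZMod (2 * p))) := by
        rw [haeven _ (by rw [hvc]; omega)]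
        congr 1
        exact congrArg (fun t : ℕ => (t : ZMod (2 * p)))
          (show (2 * p + 1 - 1) / 2 = p from by omega)
      rw [hc0]
      exact hOutBadj _ _ (hLmmem _ hx).1
end

section
/- Let n ≥ m ≥ 2 and p ≥ 1 be integers with n ≥ 2p + 1, and set c = 2p+1. Consider a 2-coloring of the edges of the complete graph on a vertex set V with |V| = 2(n+m+p) − 1, and suppose u ∈ V satisfies red-d(u) ≥ red-d(v) and red-d(u) ≥ blue-d(v) for all v ∈ V, and n + m + 2p ≤ red-d(u) ≤ n + m + 3p − 1. Then the coloring contains a monochromatic copy of S_c(n,m). -/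
open SimpleGraph

set_option linter.unusedSectionVars false
set_option linter.unusedVariables false
set_option maxHeartbeats 1600000

namespace LDSAux
open Finset

variable {V : Type*} [Fintype V] [DecidableEq V]

noncomputable def Db (H : SimpleGraph V) (v : V) : Finset V :=
  (Set.toFinite {w | H.Adj v w}).toFinset

lemma mem_Db {H : SimpleGraph V} {v w : V} : w ∈ Db H v ↔ H.Adj v w :=
  Set.Finite.mem_toFinset _

lemma ncard_eq_Db (H : SimpleGraph V) (v : V) :
    {w | H.Adj v w}.ncard = (Db H v).card :=
  Set.ncard_eq_toFinset_card _ _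

lemma deg_sum (G : SimpleGraph V) (v : V) :
    (Db G v).card + (Db Gᶜ v).card + 1 = Fintype.card V := by
  have h1 : Db Gᶜ v = (insert v (Db G v))ᶜ := by
    ext w
    simp only [mem_Db, compl_adj, Finset.mem_compl, Finset.mem_insert, mem_Db]
    push_neg
    constructor
    · rintro ⟨a, b⟩
      exact ⟨fun h => a h.symm, b⟩
    · rintro ⟨a, b⟩
      exact ⟨fun h => a h.symm, b⟩
  have h2 : v ∉ Db G v := by simp [mem_Db]
  have h3 : (insert v (Db G v)).card = (Db G v).card + 1 := Finset.card_insert_of_notMem h2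
  have h4 := Finset.card_add_card_compl (insert v (Db G v))
  rw [h1]
  omega

/-- Path-function predicate: `f` enumerates an `H`-path on `L` vertices. -/
def PF (H : SimpleGraph V) {L : ℕ} (f : Fin L → V) : Prop :=
  Function.Injective f ∧
    ∀ i : ℕ, ∀ h : i + 1 < L, H.Adj (f ⟨i, by omega⟩) (f ⟨i + 1, h⟩)

lemma assembly (H : SimpleGraph V) (p n m : ℕ) (f : Fin (2*p+1) → V)
    (hf : PF H f)
    (hhead : n + m + 2*p ≤ (Db H (f ⟨0, by omega⟩)).card)
    (hlast : m + 2*p ≤ (Db H (f ⟨2*p, by omega⟩)).card) :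
    HasCopy (LinkedDoubleStar (2*p+1) n m) H := by
  set a := f ⟨0, by omega⟩ with ha
  set b := f ⟨2*p, by omega⟩ with hb
  set F : Finset V := Finset.image f Finset.univ with hF
  have hFcard : F.card = 2*p+1 := by
    rw [hF, Finset.card_image_of_injective _ hf.1, Finset.card_univ, Fintype.card_fin]
  have hbF : b ∈ F := by exact Finset.mem_image_of_mem f (Finset.mem_univ _)
  have haF : a ∈ F := by exact Finset.mem_image_of_mem f (Finset.mem_univ _)
  -- choose W
  have hWpre : m ≤ (Db H b \ F).card := by
    have h1 : Db H b ∩ F ⊆ F.erase b := by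
      intro x hx
      rw [Finset.mem_erase]
      refine ⟨?_, (Finset.mem_inter.mp hx).2⟩
      rintro rfl
      exact (H.irrefl (mem_Db.mp (Finset.mem_inter.mp hx).1))
    have h2 : (Db H b ∩ F).card ≤ 2*p := by
      have := Finset.card_le_card h1
      rw [Finset.card_erase_of_mem hbF, hFcard] at this
      omega
    have h3 := Finset.card_inter_add_card_sdiff (Db H b) F
    omega
  obtain ⟨W, hWsub, hWcard⟩ := Finset.exists_subset_card_eq hWpre
  have hWDb : ∀ x ∈ W, H.Adj b x := fun x hx => mem_Db.mp (Finset.mem_sdiff.mp (hWsub hx)).1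
  have hWF : ∀ x ∈ W, x ∉ F := fun x hx => (Finset.mem_sdiff.mp (hWsub hx)).2
  -- choose U
  have hUpre : n ≤ (Db H a \ (F ∪ W)).card := by
    have h1 : Db H a ∩ (F ∪ W) ⊆ F.erase a ∪ W := by
      intro x hx
      rcases Finset.mem_inter.mp hx with ⟨hx1, hx2⟩
      rcases Finset.mem_union.mp hx2 with h | h
      · refine Finset.mem_union_left _ (Finset.mem_erase.mpr ⟨?_, h⟩)
        rintro rfl
        exact (H.irrefl (mem_Db.mp hx1))
      · exact Finset.mem_union_right _ h
    have h2 : (Db H a ∩ (F ∪ W)).card ≤ 2*p + m := by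
      have := Finset.card_le_card h1
      have h4 := Finset.card_union_le (F.erase a) W
      rw [Finset.card_erase_of_mem haF, hFcard] at h4
      omega
    have h3 := Finset.card_inter_add_card_sdiff (Db H a) (F ∪ W)
    omega
  obtain ⟨U, hUsub, hUcard⟩ := Finset.exists_subset_card_eq hUpre
  have hUDb : ∀ x ∈ U, H.Adj a x := fun x hx => mem_Db.mp (Finset.mem_sdiff.mp (hUsub hx)).1
  have hUF : ∀ x ∈ U, x ∉ F ∧ x ∉ W := by
    intro x hx
    have := (Finset.mem_sdiff.mp (hUsub hx)).2
    rw [Finset.mem_union] at this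
    push_neg at this
    exact this
  let eU : U ≃ Fin n := Finset.equivFinOfCardEq hUcard
  let eW : W ≃ Fin m := Finset.equivFinOfCardEq hWcard
  refine ⟨fun x => match x with
    | Sum.inl i => f i
    | Sum.inr (Sum.inl j) => (eU.symm j : V)
    | Sum.inr (Sum.inr j) => (eW.symm j : V), ?_, ?_⟩
  · -- injectivity
    have hfmem : ∀ i : Fin (2*p+1), f i ∈ F := fun i => Finset.mem_image_of_mem f (Finset.mem_univ _)
    have hUmem : ∀ j : Fin n, ((eU.symm j : U) : V) ∈ U := fun j => (eU.symm j).2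
    have hWmem : ∀ j : Fin m, ((eW.symm j : W) : V) ∈ W := fun j => (eW.symm j).2
    rintro (i | j | j) (i' | j' | j') h <;> simp only at h
    · exact congrArg Sum.inl (hf.1 h)
    · have hx := hUmem j'; rw [← h] at hx
      exact absurd (hfmem i) ((hUF _ hx).1)
    · have hx := hWmem j'; rw [← h] at hx
      exact absurd (hfmem i) (hWF _ hx)
    · have hx := hUmem j; rw [h] at hx
      exact absurd (hfmem i') ((hUF _ hx).1)
    · exact congrArg (Sum.inr ∘ Sum.inl) (eU.symm.injective (Subtype.coe_injective h))
    · have hx := hUmem j; rw [h] at hx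
      exact absurd (hWmem j') ((hUF _ hx).2)
    · have hx := hWmem j; rw [h] at hx
      exact absurd (hfmem i') (hWF _ hx)
    · have hx := hUmem j'; rw [← h] at hx
      exact absurd (hWmem j) ((hUF _ hx).2)
    · exact congrArg (Sum.inr ∘ Sum.inr) (eW.symm.injective (Subtype.coe_injective h))
  · -- adjacency
    rintro x y hxy
    rw [LinkedDoubleStar, SimpleGraph.fromRel_adj] at hxy
    obtain ⟨hne, hr⟩ := hxy
    have hchain : ∀ (i j : Fin (2*p+1)), (j : ℕ) = (i : ℕ) + 1 → H.Adj (f i) (f j) := by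
      rintro ⟨iv, hi⟩ ⟨jv, hj⟩ hij
      simp only at hij
      subst hij
      exact hf.2 iv hj
    have hfa : ∀ i : Fin (2*p+1), (i : ℕ) = 0 → f i = a := by
      rintro ⟨iv, hi⟩ hiv
      simp only at hiv
      subst hiv
      rfl
    have hfb : ∀ i : Fin (2*p+1), (i : ℕ) = 2*p+1-1 → f i = b := by
      rintro ⟨iv, hi⟩ hiv
      simp only at hiv
      rw [hb]
      exact congrArg f (Fin.ext (by simp; omega))
    rcases x with i | j | j <;> rcases y with i' | j' | j' <;>
      simp only [ldsRel, or_false, false_or, or_self] at hr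
    · rcases hr with h | h
      · exact hchain i i' h
      · exact (hchain i' i h).symm
    · show H.Adj (f i) ((eU.symm j' : U) : V)
      rw [hfa i hr]
      exact hUDb _ (eU.symm j').2
    · show H.Adj (f i) ((eW.symm j' : W) : V)
      rw [hfb i hr]
      exact hWDb _ (eW.symm j').2
    · show H.Adj ((eU.symm j : U) : V) (f i')
      rw [hfa i' hr]
      exact (hUDb _ (eU.symm j).2).symm
    · show H.Adj ((eW.symm j : W) : V) (f i')
      rw [hfb i' hr]
      exact (hWDb _ (eW.symm j).2).symm

lemma pf_extend (H : SimpleGraph V) {L : ℕ} (f : Fin L → V) (hf : PF H f) (hL : 0 < L)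
    (w : V) (hw : ∀ j, f j ≠ w) (hadj : H.Adj (f ⟨L-1, by omega⟩) w) :
    ∃ g : Fin (L+1) → V, PF H g ∧ (∀ j : Fin L, g ⟨j, by omega⟩ = f j) ∧
      g ⟨L, by omega⟩ = w := by
  refine ⟨fun j => if h : (j : ℕ) < L then f ⟨j, h⟩ else w, ⟨?_, ?_⟩, ?_, ?_⟩
  · intro x y hxy
    simp only at hxy
    by_cases hx : (x : ℕ) < L <;> by_cases hy : (y : ℕ) < L <;>
      simp only [hx, hy, dif_pos, dif_neg, not_false_iff] at hxy
    · have h5 := hf.1 hxy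
      simp only [Fin.mk.injEq] at h5
      exact Fin.ext h5
    · exact absurd hxy (hw _)
    · exact absurd hxy.symm (hw _)
    · have hx2 := x.2
      have hy2 := y.2
      exact Fin.ext (by omega)
  · intro i h
    by_cases h2 : i + 1 < L
    · have h3 : i < L := by omega
      simp only [h2, h3, dif_pos]
      exact hf.2 i h2
    · have h3 : i + 1 = L := by omega
      have h4 : i < L := by omega
      simp only [h4, dif_pos, dif_neg (by omega : ¬ (i+1 < L))]
      have e : (⟨i, h4⟩ : Fin L) = ⟨L-1, by omega⟩ := Fin.ext (show i = L - 1 by omega)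
      rw [e]
      exact hadj
  · intro j
    simp only [j.2, dif_pos]
  · simp only [dif_neg (lt_irrefl L)]

lemma pf_trunc (H : SimpleGraph V) {L : ℕ} (f : Fin L → V) (hf : PF H f) (M : ℕ)
    (hM : M ≤ L) : PF H (fun j : Fin M => f ⟨j, by omega⟩) := by
  constructor
  · intro x y hxy
    simp only at hxy
    have h5 := hf.1 hxy
    simp only [Fin.mk.injEq] at h5
    exact Fin.ext h5
  · intro i h
    exact hf.2 i (by omega)

lemma greedy (H : SimpleGraph V) (a : V) (L : ℕ) (hdeg : ∀ v, L + 1 ≤ (Db H v).card) :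
    ∃ f : Fin (L+1) → V, PF H f ∧ f ⟨0, by omega⟩ = a := by
  have aux : ∀ t, t ≤ L → ∃ f : Fin (t+1) → V, PF H f ∧ f ⟨0, by omega⟩ = a := by
    intro t
    induction t with
    | zero =>
      intro _
      refine ⟨fun _ => a, ⟨?_, ?_⟩, rfl⟩
      · intro x y _
        have hx2 := x.2
        have hy2 := y.2
        exact Fin.ext (by omega)
      · intro i h; omega
    | succ t ih =>
      intro ht
      obtain ⟨f, hf, hfa⟩ := ih (by omega)
      set b := f ⟨t, by omega⟩ with hb
      have hcard : (Finset.image f Finset.univ).card = t + 1 := by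
        rw [Finset.card_image_of_injective _ hf.1, Finset.card_univ, Fintype.card_fin]
      have : ¬ (Db H b ⊆ Finset.image f Finset.univ) := by
        intro hsub
        have := Finset.card_le_card hsub
        have := hdeg b
        omega
      obtain ⟨w, hw1, hw2⟩ := Finset.not_subset.mp this
      obtain ⟨g, hg, hgf, _⟩ := pf_extend H f hf (by omega) w
        (fun j hj => hw2 (hj ▸ Finset.mem_image_of_mem f (Finset.mem_univ j)))
        (by
          have e : (⟨t+1-1, by omega⟩ : Fin (t+1)) = ⟨t, by omega⟩ :=
            Fin.ext (show t+1-1 = t by omega)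
          rw [e, ← hb]
          exact mem_Db.mp hw1)
      refine ⟨g, hg, ?_⟩
      have h0 := hgf ⟨0, by omega⟩
      exact h0.trans hfa
  exact aux L le_rfl

lemma exists_max_path (H : SimpleGraph V) (z : V) :
    ∃ (L : ℕ) (f : Fin L → V) (hL : 0 < L), PF H f ∧ f ⟨0, hL⟩ = z ∧
      ∀ (L' : ℕ) (f' : Fin L' → V) (h : 0 < L'), PF H f' → f' ⟨0, h⟩ = z → L' ≤ L := by
  classical
  set T : Set ℕ := {t | 0 < t ∧ ∃ f : Fin t → V, PF H f ∧ ∀ h : 0 < t, f ⟨0, h⟩ = z} with hT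
  have h1 : 1 ∈ T := by
    refine ⟨one_pos, fun _ => z, ⟨?_, ?_⟩, fun _ => rfl⟩
    · intro x y _
      have hx2 := x.2
      have hy2 := y.2
      exact Fin.ext (by omega)
    · intro i h; omega
  have hbdd : BddAbove T := by
    refine ⟨Fintype.card V, ?_⟩
    rintro t ⟨ht, f, hf, -⟩
    have := Fintype.card_le_of_injective f hf.1
    simpa using this
  have hne : T.Nonempty := ⟨1, h1⟩
  have hmem := Nat.sSup_mem hne hbdd
  obtain ⟨hpos, f, hf, hfz⟩ := hmem
  refine ⟨sSup T, f, hpos, hf, hfz hpos, ?_⟩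
  intro L' f' h hf' hz'
  exact le_csSup hbdd ⟨h, f', hf', fun _ => hz'⟩

lemma rotate (H : SimpleGraph V) {L : ℕ} (f : Fin L → V) (hf : PF H f) (i : ℕ)
    (hi : i + 2 < L)
    (hadj : H.Adj (f ⟨L-1, by omega⟩) (f ⟨i, by omega⟩)) :
    ∃ g : Fin L → V, PF H g ∧ g ⟨0, by omega⟩ = f ⟨0, by omega⟩ ∧
      g ⟨L-1, by omega⟩ = f ⟨i+1, by omega⟩ ∧ Set.range g = Set.range f := by
  have key : ∀ (x y : ℕ) (hx : x < L) (hy : y < L), y = x + 1 →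
      H.Adj (f ⟨x, hx⟩) (f ⟨y, hy⟩) := by
    rintro x y hx hy rfl
    exact hf.2 x hy
  set ν : Fin L → Fin L := fun j =>
    ⟨if (j : ℕ) ≤ i then (j : ℕ) else if (j : ℕ) = i + 1 then L - 1 else L + i - (j : ℕ),
     by split_ifs <;> omega⟩ with hν
  have hval : ∀ (jv : ℕ) (h : jv < L),
      (ν ⟨jv, h⟩ : ℕ) = if jv ≤ i then jv else if jv = i + 1 then L - 1 else L + i - jv :=
    fun jv h => rfl
  have hνinj : Function.Injective ν := by
    intro x y hxy
    have hx := x.2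
    have hy := y.2
    have hvx := hval x.1 x.2
    have hvy := hval y.1 y.2
    rw [Fin.eta] at hvx hvy
    have hxy2 : (ν x : ℕ) = (ν y : ℕ) := congrArg Fin.val hxy
    rw [hvx, hvy] at hxy2
    split_ifs at hxy2 <;> (apply Fin.ext; omega)
  have hνbij : Function.Bijective ν := ⟨hνinj, Finite.surjective_of_injective hνinj⟩
  have fν : ∀ (jv : ℕ) (h : jv < L) (t : ℕ) (ht : t < L), (ν ⟨jv, h⟩ : ℕ) = t →
      f (ν ⟨jv, h⟩) = f ⟨t, ht⟩ := by
    intro jv h t ht he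
    congr 1
    exact Fin.ext he
  refine ⟨f ∘ ν, ⟨hf.1.comp hνinj, ?_⟩, ?_, ?_, ?_⟩
  · intro j h
    simp only [Function.comp_apply]
    by_cases h1 : j + 1 ≤ i
    · rw [fν j (by omega) j (by omega) (by rw [hval]; rw [if_pos (by omega)]),
        fν (j+1) h (j+1) h (by rw [hval]; rw [if_pos h1])]
      exact key j (j+1) _ _ rfl
    · by_cases h2 : j + 1 = i + 1
      · rw [fν j (by omega) i (by omega)
            (by rw [hval]; rw [if_pos (by omega : j ≤ i)]; omega),
          fν (j+1) h (L-1) (by omega)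
            (by rw [hval]; rw [if_neg (by omega), if_pos h2])]
        exact hadj.symm
      · by_cases h3 : j = i + 1
        · rw [fν j (by omega) (L-1) (by omega)
              (by rw [hval]; rw [if_neg (by omega), if_pos h3]),
            fν (j+1) h (L-2) (by omega)
              (by rw [hval]; rw [if_neg (by omega), if_neg h2]; omega)]
          exact (key (L-2) (L-1) (by omega) (by omega) (by omega)).symm
        · rw [fν j (by omega) (L+i-j) (by omega)
              (by rw [hval]; rw [if_neg (by omega), if_neg h3]),
            fν (j+1) h (L+i-(j+1)) (by omega)
              (by rw [hval]; rw [if_neg (by omega), if_neg h2])]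
          exact (key (L+i-(j+1)) (L+i-j) (by omega) (by omega) (by omega)).symm
  · simp only [Function.comp_apply]
    exact fν 0 (by omega) 0 (by omega) (by rw [hval]; rw [if_pos (by omega)])
  · simp only [Function.comp_apply]
    exact fν (L-1) (by omega) (i+1) (by omega)
      (by rw [hval]; rw [if_neg (by omega), if_neg (by omega)]; omega)
  · rw [Set.range_comp, hνbij.2.range_eq, Set.image_univ]

lemma interleave (H : SimpleGraph V) (p : ℕ) (hp : 0 < p) (u : V) (s : Fin p → V)
    (hs : Function.Injective s) (hus : ∀ i, u ≠ s i)
    (hcom0 : p + 2 ≤ (Db H u ∩ Db H (s ⟨0, hp⟩)).card)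
    (hcom : ∀ i : ℕ, ∀ h : i + 1 < p,
      2*p + 1 ≤ (Db H (s ⟨i, by omega⟩) ∩ Db H (s ⟨i+1, h⟩)).card) :
    ∃ f : Fin (2*p+1) → V, PF H f ∧ f ⟨0, by omega⟩ = u ∧
      f ⟨2*p, by omega⟩ = s ⟨p-1, by omega⟩ := by
  have scong : ∀ (a b : ℕ) (ha : a < p) (hb : b < p), a = b → s ⟨a, ha⟩ = s ⟨b, hb⟩ := by
    rintro a b ha hb rfl; rfl
  have ccong : ∀ (c : Fin p → V) (a b : ℕ) (ha : a < p) (hb : b < p), a = b →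
      c ⟨a, ha⟩ = c ⟨b, hb⟩ := by
    rintro c a b ha hb rfl; rfl
  -- step 1: connectors
  have aux : ∀ j, ∀ hjle : j ≤ p, ∃ c : Fin j → V, Function.Injective c ∧
      (∀ t, c t ≠ u ∧ ∀ i, c t ≠ s i) ∧
      (∀ (t : ℕ) (h : t < j),
        H.Adj (if t = 0 then u else s ⟨t-1, by omega⟩) (c ⟨t, h⟩) ∧
        H.Adj (c ⟨t, h⟩) (s ⟨t, by omega⟩)) := by
    intro j
    induction j with
    | zero =>
      intro _
      exact ⟨fun t => t.elim0, fun t => t.elim0, fun t => t.elim0,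
        fun t h => absurd h (by omega)⟩
    | succ j ih =>
      intro hj
      obtain ⟨c, hcinj, hcne, hcadj⟩ := ih (by omega)
      have hjp : j < p := by omega
      set prev : V := if j = 0 then u else s ⟨j-1, by omega⟩ with hprev
      set pool : Finset V := Db H prev ∩ Db H (s ⟨j, hjp⟩) with hpool
      have hpoolcard : (j = 0 ∧ p + 2 ≤ pool.card) ∨ 2*p+1 ≤ pool.card := by
        by_cases h0 : j = 0
        · left
          refine ⟨h0, ?_⟩
          subst h0
          simp only [hpool, hprev, if_pos rfl]
          exact hcom0
        · right
          have hthis := hcom (j-1) (by omega)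
          have e : (⟨j-1+1, by omega⟩ : Fin p) = ⟨j, hjp⟩ :=
            Fin.ext (show j-1+1 = j by omega)
          rw [e] at hthis
          simp only [hpool, hprev, if_neg h0]
          exact hthis
      set E : Finset V :=
        (insert u (Finset.image s Finset.univ)) ∪ Finset.image c Finset.univ with hE
      have hEcard : E.card ≤ 1 + p + j := by
        calc E.card ≤ (insert u (Finset.image s Finset.univ)).card
            + (Finset.image c Finset.univ).card := Finset.card_union_le _ _
        _ ≤ 1 + p + j := by
            have h1 := Finset.card_insert_le u (Finset.image s Finset.univ)
            have h2 := Finset.card_image_le (f := s) (s := Finset.univ)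
            have h3 := Finset.card_image_le (f := c) (s := Finset.univ)
            simp only [Finset.card_univ, Fintype.card_fin] at h2 h3
            omega
      have hwex : ∃ w ∈ pool, w ∉ E := by
        by_contra hcon
        push_neg at hcon
        have hsub : pool ⊆ E := fun x hx => hcon x hx
        have := Finset.card_le_card hsub
        rcases hpoolcard with ⟨h0, h⟩ | h <;> omega
      obtain ⟨w, hwpool, hwE⟩ := hwex
      have hwu : w ≠ u := fun h => hwE (by
        rw [hE, h]; exact Finset.mem_union_left _ (Finset.mem_insert_self _ _))
      have hws : ∀ i, w ≠ s i := fun i h => hwE (by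
        rw [hE]
        exact Finset.mem_union_left _ (Finset.mem_insert_of_mem
          (h ▸ Finset.mem_image_of_mem s (Finset.mem_univ i))))
      have hwc : ∀ t, w ≠ c t := fun t h => hwE (by
        rw [hE]
        exact Finset.mem_union_right _ (h ▸ Finset.mem_image_of_mem c (Finset.mem_univ t)))
      refine ⟨fun t => if h : (t : ℕ) < j then c ⟨t, h⟩ else w, ?_, ?_, ?_⟩
      · intro x y hxy
        simp only at hxy
        by_cases hx : (x : ℕ) < j <;> by_cases hy : (y : ℕ) < j <;>
          simp only [hx, hy, dif_pos, dif_neg, not_false_iff] at hxy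
        · have h5 := hcinj hxy
          simp only [Fin.mk.injEq] at h5
          exact Fin.ext h5
        · exact absurd hxy.symm (hwc _)
        · exact absurd hxy (hwc _)
        · have hx2 := x.2
          have hy2 := y.2
          exact Fin.ext (by omega)
      · intro t
        by_cases htj : (t : ℕ) < j
        · simp only [htj, dif_pos]
          exact hcne _
        · simp only [htj, dif_neg, not_false_iff]
          exact ⟨hwu, hws⟩
      · intro t h
        by_cases htj : t < j
        · simp only [htj, dif_pos]
          exact hcadj t htj
        · have htj2 : t = j := by omega
          subst htj2
          simp only [htj, dif_neg, not_false_iff]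
          constructor
          · have h1 : H.Adj prev w := mem_Db.mp (Finset.mem_inter.mp hwpool).1
            rw [hprev] at h1
            by_cases h0 : t = 0
            · rw [if_pos h0]
              rw [if_pos h0] at h1
              exact h1
            · rw [if_neg h0]
              rw [if_neg h0] at h1
              exact h1
          · have h2 : H.Adj (s ⟨t, hjp⟩) w := mem_Db.mp (Finset.mem_inter.mp hwpool).2
            exact h2.symm
  obtain ⟨c, hcinj, hcne, hcadj⟩ := aux p le_rfl
  -- step 2: assemble
  refine ⟨fun t => if (t : ℕ) = 0 then u
    else if h1 : (t : ℕ) % 2 = 1 then c ⟨(t : ℕ)/2, by omega⟩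
    else s ⟨(t : ℕ)/2 - 1, by have := t.2; omega⟩, ⟨?_, ?_⟩, ?_, ?_⟩
  · -- injective
    intro x y hxy
    simp only at hxy
    by_cases hx0 : (x : ℕ) = 0 <;> by_cases hy0 : (y : ℕ) = 0
    · exact Fin.ext (by omega)
    · by_cases hy1 : (y : ℕ) % 2 = 1 <;>
        simp only [hx0, hy0, hy1, if_pos, if_neg, dif_pos, dif_neg, not_false_iff] at hxy
      · exact absurd hxy.symm (hcne _).1
      · exact absurd hxy.symm (fun h => hus _ h.symm)
    · by_cases hx1 : (x : ℕ) % 2 = 1 <;>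
        simp only [hx0, hy0, hx1, if_pos, if_neg, dif_pos, dif_neg, not_false_iff] at hxy
      · exact absurd hxy (hcne _).1
      · exact absurd hxy (fun h => hus _ h.symm)
    · by_cases hx1 : (x : ℕ) % 2 = 1 <;> by_cases hy1 : (y : ℕ) % 2 = 1 <;>
        simp only [hx0, hy0, hx1, hy1, if_pos, if_neg, dif_pos, dif_neg, not_false_iff] at hxy
      · have h5 := hcinj hxy
        simp only [Fin.mk.injEq] at h5
        exact Fin.ext (by omega)
      · exact absurd hxy ((hcne _).2 _)
      · exact absurd hxy.symm ((hcne _).2 _)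
      · have h5 := hs hxy
        simp only [Fin.mk.injEq] at h5
        have hx2 := x.2
        have hy2 := y.2
        exact Fin.ext (by omega)
  · -- adjacency
    intro i h
    by_cases hi0 : i = 0
    · subst hi0
      simp only [if_pos rfl, if_neg (by omega : ¬ (0+1 : ℕ) = 0),
        dif_pos (by omega : (0+1 : ℕ) % 2 = 1), if_true, dite_true]
      have hthis := (hcadj 0 (by omega)).1
      rw [if_pos rfl] at hthis
      have e : c ⟨(0+1)/2, by omega⟩ = c ⟨0, by omega⟩ := ccong c _ _ _ _ (by omega)
      rw [e]
      exact hthis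
    · by_cases hi1 : i % 2 = 1
      · simp only [if_neg hi0, if_neg (by omega : ¬ (i+1 : ℕ) = 0), dif_pos hi1,
          dif_neg (by omega : ¬ (i+1) % 2 = 1)]
        have hthis := (hcadj (i/2) (by omega)).2
        have e : s ⟨(i+1)/2 - 1, by omega⟩ = s ⟨i/2, by omega⟩ := scong _ _ _ _ (by omega)
        rw [e]
        exact hthis
      · simp only [if_neg hi0, if_neg (by omega : ¬ (i+1 : ℕ) = 0), dif_neg hi1,
          dif_pos (by omega : (i+1) % 2 = 1)]
        have hthis := (hcadj ((i+1)/2) (by omega)).1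
        rw [if_neg (by omega : ¬ (i+1)/2 = 0)] at hthis
        have e : s ⟨i/2 - 1, by omega⟩ = s ⟨(i+1)/2 - 1, by omega⟩ := scong _ _ _ _ (by omega)
        rw [e]
        exact hthis
  · simp
  · have h2p : ¬ ((2*p : ℕ) = 0) := by omega
    simp only [if_neg h2p, dif_neg (by omega : ¬ (2*p) % 2 = 1)]
    exact scong _ _ _ _ (by omega)

def avoidG (H : SimpleGraph V) (Y : Finset V) : SimpleGraph V where
  Adj a b := H.Adj a b ∧ a ∉ Y ∧ b ∉ Y
  symm := ⟨by rintro a b ⟨h1, h2, h3⟩; exact ⟨h1.symm, h3, h2⟩⟩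
  loopless := ⟨by rintro a ⟨h1, -, -⟩; exact H.irrefl h1⟩

lemma avoidG_adj {H : SimpleGraph V} {Y : Finset V} {a b : V} :
    (avoidG H Y).Adj a b ↔ H.Adj a b ∧ a ∉ Y ∧ b ∉ Y := Iff.rfl

lemma stuck_traps (H' : SimpleGraph V) (z : V) (L : ℕ) (f : Fin L → V) (hL : 0 < L)
    (hf : PF H' f) (hz : f ⟨0, hL⟩ = z)
    (hmax : ∀ (L' : ℕ) (f' : Fin L' → V) (h : 0 < L'), PF H' f' → f' ⟨0, h⟩ = z → L' ≤ L) :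
    ∃ T : Finset V, (Db H' (f ⟨L-1, by omega⟩)).card ≤ T.card ∧
      ∀ w ∈ T, w ∈ Set.range f ∧ ∀ y, H'.Adj w y → y ∈ Set.range f := by
  classical
  set v := f ⟨L-1, by omega⟩ with hv
  have htrap : ∀ (g : Fin L → V), PF H' g → g ⟨0, hL⟩ = z → Set.range g = Set.range f →
      ∀ y, H'.Adj (g ⟨L-1, by omega⟩) y → y ∈ Set.range f := by
    intro g hg hgz hgr y hy
    by_contra hyn
    obtain ⟨g', hg', hg'e, hg'l⟩ := pf_extend H' g hg hL y
      (fun j hj => hyn (hgr ▸ ⟨j, hj⟩)) hy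
    have hle := hmax (L+1) g' (by omega) hg' ((hg'e ⟨0, hL⟩).trans hgz)
    omega
  have hvtrap : ∀ y, H'.Adj v y → y ∈ Set.range f := htrap f hf hz rfl
  set g' : Fin L → V := fun j => if h : (j : ℕ)+1 < L then f ⟨(j : ℕ)+1, h⟩ else v with hg'
  set J : Finset (Fin L) :=
    Finset.univ.filter (fun j => H'.Adj v (f j) ∧ (j : ℕ)+2 < L) with hJdef
  have hfcong : ∀ (a b : ℕ) (ha : a < L) (hb : b < L), a = b → f ⟨a, ha⟩ = f ⟨b, hb⟩ := by
    rintro a b ha hb rfl; rfl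
  -- injection from (Db H' v).erase (f ⟨L-2⟩) into J
  have hJ : (Db H' v).card - 1 ≤ J.card := by
    have hcard : ((Db H' v).erase (f ⟨L-2, by omega⟩)).card ≤ J.card := by
      have hmem : ∀ w ∈ (Db H' v).erase (f ⟨L-2, by omega⟩), w ∈ Set.range f := by
        intro w hw
        exact hvtrap w (mem_Db.mp (Finset.mem_of_mem_erase hw))
      refine Finset.card_le_card_of_injOn
        (fun w => if h : w ∈ Set.range f then Classical.choose h else ⟨0, hL⟩) ?_ ?_
      · intro w hw
        have hwr := hmem w hw
        have hspec : f (Classical.choose hwr) = w := Classical.choose_spec hwr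
        simp only [dif_pos hwr]
        show Classical.choose hwr ∈ J
        rw [hJdef, Finset.mem_filter]
        refine ⟨Finset.mem_univ _, ?_, ?_⟩
        · rw [hspec]
          exact mem_Db.mp (Finset.mem_of_mem_erase hw)
        · set j := Classical.choose hwr with hj
          have hj2 := j.2
          have hne1 : (j : ℕ) ≠ L - 1 := by
            intro hcon
            have he : f j = v := hfcong (j : ℕ) (L-1) j.2 (by omega) hcon
            rw [hspec] at he
            exact (mem_Db.mp (Finset.mem_of_mem_erase hw)).ne' he
          have hne2 : (j : ℕ) ≠ L - 2 := by
            intro hcon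
            have he : f j = f ⟨L-2, by omega⟩ := hfcong (j : ℕ) (L-2) j.2 (by omega) hcon
            rw [hspec] at he
            exact (Finset.ne_of_mem_erase hw) he
          omega
      · intro w hw w' hw' heq
        rw [Finset.mem_coe] at hw hw'
        have hwr := hmem w hw
        have hwr' := hmem w' hw'
        simp only [dif_pos hwr, dif_pos hwr'] at heq
        rw [← Classical.choose_spec hwr, ← Classical.choose_spec hwr', heq]
    have := Finset.card_erase_of_mem (a := f ⟨L-2, by omega⟩) (s := Db H' v)
    by_cases hmem2 : f ⟨L-2, by omega⟩ ∈ Db H' v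
    · have h2 := this hmem2
      omega
    · have h2 : (Db H' v).erase (f ⟨L-2, by omega⟩) = Db H' v :=
        Finset.erase_eq_of_notMem hmem2
      rw [h2] at hcard
      omega
  refine ⟨insert v (J.image g'), ?_, ?_⟩
  · have hvnot : v ∉ J.image g' := by
      intro hcon
      obtain ⟨j, hjJ, hje⟩ := Finset.mem_image.mp hcon
      rw [hJdef, Finset.mem_filter] at hjJ
      have hjlt : (j : ℕ) + 1 < L := by omega
      rw [hg'] at hje
      simp only [dif_pos hjlt] at hje
      have := hf.1 (hje.trans hv)
      simp only [Fin.mk.injEq] at this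
      omega
    have himg : (J.image g').card = J.card := by
      apply Finset.card_image_of_injOn
      intro j hj j' hj' heq
      rw [Finset.mem_coe] at hj hj'
      rw [hJdef, Finset.mem_filter] at hj hj'
      have hjlt : (j : ℕ) + 1 < L := by omega
      have hjlt' : (j' : ℕ) + 1 < L := by omega
      rw [hg'] at heq
      simp only [dif_pos hjlt, dif_pos hjlt'] at heq
      have := hf.1 heq
      simp only [Fin.mk.injEq] at this
      exact Fin.ext (by omega)
    rw [Finset.card_insert_of_notMem hvnot, himg]
    omega
  · intro w hw
    rcases Finset.mem_insert.mp hw with h | h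
    · subst h
      exact ⟨⟨_, hv.symm⟩, hvtrap⟩
    · obtain ⟨j, hjJ, hje⟩ := Finset.mem_image.mp h
      rw [hJdef, Finset.mem_filter] at hjJ
      obtain ⟨-, hadj, hlt⟩ := hjJ
      have hjlt : (j : ℕ) + 1 < L := by omega
      rw [hg'] at hje
      simp only [dif_pos hjlt] at hje
      subst hje
      refine ⟨⟨_, rfl⟩, ?_⟩
      have hchord : H'.Adj (f ⟨L-1, by omega⟩) (f ⟨(j : ℕ), by omega⟩) := hadj
      obtain ⟨g, hg, hg0, hgl, hgr⟩ := rotate H' f hf (j : ℕ) hlt hchord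
      have hresult := htrap g hg (hg0.trans hz) hgr
      intro y hy
      apply hresult y
      rw [hgl]
      exact hy

lemma inter_card_lower (A B : Finset V) :
    A.card + B.card - Fintype.card V ≤ (A ∩ B).card := by
  have h := Finset.card_union_add_card_inter A B
  have h2 := Finset.card_le_univ (A ∪ B)
  omega


end LDSAux

open LDSAux in
/-- if `u` has maximum monochromatic degree with
`n + m + 2p ≤ red-d(u) ≤ n + m + 3p − 1`, and `n ≥ 2p + 1`, `m ≥ 2`, then
there is a monochromatic `S_c(n,m)`. -/
theorem lds_middle_k (n m p : ℕ) (hm : 2 ≤ m) (hmn : m ≤ n) (hp : 1 ≤ p)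
    (hn : 2 * p + 1 ≤ n) {V : Type*} [Fintype V]
    (hV : Fintype.card V = 2 * (n + m + p) - 1) (G : SimpleGraph V) (u : V)
    (hmaxr : ∀ v : V, ({w | G.Adj v w}).ncard ≤ ({w | G.Adj u w}).ncard)
    (hmaxb : ∀ v : V, ({w | Gᶜ.Adj v w}).ncard ≤ ({w | G.Adj u w}).ncard)
    (hdu1 : n + m + 2 * p ≤ ({w | G.Adj u w}).ncard)
    (hdu2 : ({w | G.Adj u w}).ncard ≤ n + m + 3 * p - 1) :
    HasMonoLDS G (2 * p + 1) n m := by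

  classical
  letI hdec : DecidableEq V := Classical.decEq V
  set N := Fintype.card V with hNdef
  have hN : N + 1 = 2 * (n + m + p) := by omega
  simp only [ncard_eq_Db] at hmaxr hmaxb hdu1 hdu2
  have hsum : ∀ v : V, (Db G v).card + (Db Gᶜ v).card + 1 = N := fun v => deg_sum G v
  set q := m + 2*p - 1 with hq
  set Y : Finset V := Finset.univ.filter (fun v => (Db Gᶜ v).card ≤ q) with hY
  set Z : Finset V := Finset.univ.filter (fun v => (Db G v).card ≤ q) with hZ
  have hYmem : ∀ v : V, v ∈ Y ↔ (Db Gᶜ v).card ≤ q := by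
    intro v; rw [hY, Finset.mem_filter]; simp
  have hZmem : ∀ v : V, v ∈ Z ↔ (Db G v).card ≤ q := by
    intro v; rw [hZ, Finset.mem_filter]; simp
  by_cases hYbig : p + 1 ≤ Y.card
  · -- Case A : red interleave inside Y
    obtain ⟨S1, hS1sub, hS1card⟩ := Finset.exists_subset_card_eq hYbig
    have e := Finset.equivFinOfCardEq hS1card
    have hEinj : ∀ a b : Fin (p+1), ((e.symm a : S1) : V) = ((e.symm b : S1) : V) → a = b :=
      fun a b h => e.symm.injective (Subtype.coe_injective h)
    have hSY : ∀ a : Fin (p+1), ((e.symm a : S1) : V) ∈ Y :=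
      fun a => hS1sub (e.symm a).2
    have hrdY : ∀ v ∈ Y, N - 1 - q ≤ (Db G v).card := by
      intro v hv
      rw [hYmem] at hv
      have := hsum v
      omega
    have hcomY : ∀ v ∈ Y, ∀ w ∈ Y, 2*p + 1 ≤ (Db G v ∩ Db G w).card ∧
        p + 2 ≤ (Db G v ∩ Db G w).card := by
      intro v hv w hw
      have h1 := hrdY v hv
      have h2 := hrdY w hw
      have h3 := inter_card_lower (Db G v) (Db G w)
      have h4 := hsum v
      constructor <;> omega
    set hub : V := ((e.symm ⟨0, by omega⟩ : S1) : V) with hhub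
    set s : Fin p → V := fun i => ((e.symm ⟨(i : ℕ)+1, by omega⟩ : S1) : V) with hs
    obtain ⟨f, hf, hf0, hfl⟩ := interleave (V := V) G p hp hub s
      (by
        intro a b hab
        have := hEinj _ _ hab
        simp only [Fin.mk.injEq] at this
        exact Fin.ext (by omega))
      (by
        intro i hcon
        have := hEinj _ _ hcon
        simp only [Fin.mk.injEq] at this
        omega)
      (by
        have := (hcomY hub (hSY _) (s ⟨0, hp⟩) (hSY _)).2
        exact this)
      (by
        intro i h
        exact (hcomY (s ⟨i, by omega⟩) (hSY _) (s ⟨i+1, h⟩) (hSY _)).1)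
    left
    refine assembly (V := V) G p n m f hf ?_ ?_
    · rw [hf0]
      have := hrdY hub (hSY _)
      omega
    · rw [hfl]
      have := hrdY (s ⟨p-1, by omega⟩) (hSY _)
      omega
  · by_cases hZbig : p + 1 ≤ Z.card
    · -- Case B : blue interleave inside Z
      obtain ⟨S1, hS1sub, hS1card⟩ := Finset.exists_subset_card_eq hZbig
      have e := Finset.equivFinOfCardEq hS1card
      have hEinj : ∀ a b : Fin (p+1), ((e.symm a : S1) : V) = ((e.symm b : S1) : V) → a = b :=
        fun a b h => e.symm.injective (Subtype.coe_injective h)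
      have hSZ : ∀ a : Fin (p+1), ((e.symm a : S1) : V) ∈ Z :=
        fun a => hS1sub (e.symm a).2
      have hbdZ : ∀ v ∈ Z, N - 1 - q ≤ (Db Gᶜ v).card := by
        intro v hv
        rw [hZmem] at hv
        have := hsum v
        omega
      have hcomZ : ∀ v ∈ Z, ∀ w ∈ Z, 2*p + 1 ≤ (Db Gᶜ v ∩ Db Gᶜ w).card ∧
          p + 2 ≤ (Db Gᶜ v ∩ Db Gᶜ w).card := by
        intro v hv w hw
        have h1 := hbdZ v hv
        have h2 := hbdZ w hw
        have h3 := inter_card_lower (Db Gᶜ v) (Db Gᶜ w)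
        have h4 := hsum v
        constructor <;> omega
      set hub : V := ((e.symm ⟨0, by omega⟩ : S1) : V) with hhub
      set s : Fin p → V := fun i => ((e.symm ⟨(i : ℕ)+1, by omega⟩ : S1) : V) with hs
      obtain ⟨f, hf, hf0, hfl⟩ := interleave (V := V) Gᶜ p hp hub s
        (by
          intro a b hab
          have := hEinj _ _ hab
          simp only [Fin.mk.injEq] at this
          exact Fin.ext (by omega))
        (by
          intro i hcon
          have := hEinj _ _ hcon
          simp only [Fin.mk.injEq] at this
          omega)
        (by exact (hcomZ hub (hSZ _) (s ⟨0, hp⟩) (hSZ _)).2)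
        (by
          intro i h
          exact (hcomZ (s ⟨i, by omega⟩) (hSZ _) (s ⟨i+1, h⟩) (hSZ _)).1)
      right
      refine assembly (V := V) Gᶜ p n m f hf ?_ ?_
      · rw [hf0]
        have := hbdZ hub (hSZ _)
        omega
      · rw [hfl]
        have := hbdZ (s ⟨p-1, by omega⟩) (hSZ _)
        omega
    · by_cases hZone : Z.card = 0
      · -- Case C : red greedy from u
        have hallrd : ∀ v : V, 2*p + 1 ≤ (Db G v).card := by
          intro v
          have hvZ : v ∉ Z := by
            intro hv
            have := Finset.card_pos.mpr ⟨v, hv⟩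
            omega
          rw [hZmem] at hvZ
          omega
        obtain ⟨f, hf, hf0⟩ := greedy (V := V) G u (2*p) hallrd
        left
        refine assembly (V := V) G p n m f hf ?_ ?_
        · rw [hf0]; exact hdu1
        · have := hallrd (f ⟨2*p, by omega⟩)
          have hvZ : f ⟨2*p, by omega⟩ ∉ Z := by
            intro hv
            have := Finset.card_pos.mpr ⟨_, hv⟩
            omega
          rw [hZmem] at hvZ
          omega
      · by_cases hYone : Y.card = 0
        · -- Case D : blue greedy from z ∈ Z
          obtain ⟨z, hzZ⟩ := Finset.card_pos.mp (by omega : 0 < Z.card)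
          have hallbd : ∀ v : V, 2*p + 1 ≤ (Db Gᶜ v).card := by
            intro v
            have hvY : v ∉ Y := by
              intro hv
              have := Finset.card_pos.mpr ⟨v, hv⟩
              omega
            rw [hYmem] at hvY
            omega
          obtain ⟨f, hf, hf0⟩ := greedy (V := V) Gᶜ z (2*p) hallbd
          right
          refine assembly (V := V) Gᶜ p n m f hf ?_ ?_
          · rw [hf0]
            rw [hZmem] at hzZ
            have := hsum z
            omega
          · have hvY : f ⟨2*p, by omega⟩ ∉ Y := by
              intro hv
              have := Finset.card_pos.mpr ⟨_, hv⟩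
              omega
            rw [hYmem] at hvY
            omega
        · -- Case E : 1 ≤ |Y| ≤ p, 1 ≤ |Z| ≤ p
          obtain ⟨z, hzZ⟩ := Finset.card_pos.mp (by omega : 0 < Z.card)
          have hYle : Y.card ≤ p := by omega
          have hZle : Z.card ≤ p := by omega
          have hzZ' := (hZmem z).mp hzZ
          have hzbd : N - 1 - q ≤ (Db Gᶜ z).card := by
            have := hsum z
            omega
          have hzY : z ∉ Y := by
            rw [hYmem]
            have := hsum z
            omega
          have hru : N - 1 - q ≤ (Db G u).card := le_trans hzbd (hmaxb z)
          have huY : u ∈ Y := by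
            rw [hYmem]
            have := hsum u
            omega
          set H' : SimpleGraph V := avoidG Gᶜ Y with hH'
          have hH'adj : ∀ a b : V, H'.Adj a b ↔ Gᶜ.Adj a b ∧ a ∉ Y ∧ b ∉ Y := by
            intro a b; rw [hH']; exact Iff.rfl
          obtain ⟨L, f, hL, hf, hfz, hmax⟩ := exists_max_path (V := V) H' z
          have hfcong : ∀ (a b : ℕ) (ha : a < L) (hb : b < L), a = b →
              f ⟨a, ha⟩ = f ⟨b, hb⟩ := by rintro a b ha hb rfl; rfl
          have hrangeY : ∀ j : Fin L, f j ∉ Y := by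
            intro j
            by_cases hj0 : (j : ℕ) = 0
            · have : f j = z := by
                rw [← hfz]
                exact hfcong _ _ j.2 hL hj0
              rw [this]
              exact hzY
            · have hadj := hf.2 ((j : ℕ)-1) (by omega)
              have he : f ⟨(j : ℕ)-1+1, by omega⟩ = f j := hfcong _ _ (by omega) j.2 (by omega)
              rw [he] at hadj
              exact ((hH'adj _ _).mp hadj).2.2
          by_cases hlong : 2*p + 1 ≤ L
          · -- E-long : blue copy by truncation
            have hgpf := pf_trunc (V := V) H' f hf (2*p+1) hlong
            have hgblue : PF Gᶜ (fun j : Fin (2*p+1) => f ⟨j, by omega⟩) := by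
              refine ⟨hgpf.1, ?_⟩
              intro i h
              exact ((hH'adj _ _).mp (hgpf.2 i h)).1
            right
            refine assembly (V := V) Gᶜ p n m _ hgblue ?_ ?_
            · have h0 : f ⟨(0 : ℕ), by omega⟩ = z := by
                rw [← hfz]
              simp only [h0]
              omega
            · have hnotY := hrangeY ⟨2*p, by omega⟩
              rw [hYmem] at hnotY
              simp only []
              have := hsum (f ⟨2*p, by omega⟩)
              omega
          · -- E-stuck : red interleave with trapped vertices
            obtain ⟨T, hTcard, hTtrap⟩ := stuck_traps (V := V) H' z L f hL hf hfz hmax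
            set vend := f ⟨L-1, by omega⟩ with hvend
            have hvendY : vend ∉ Y := hrangeY _
            have hvendbd : m + 2*p ≤ (Db Gᶜ vend).card := by
              rw [hYmem] at hvendY
              omega
            have hsubDb : Db Gᶜ vend ⊆ Db H' vend ∪ Y := by
              intro y hy
              by_cases hyY : y ∈ Y
              · exact Finset.mem_union_right _ hyY
              · refine Finset.mem_union_left _ ?_
                rw [mem_Db] at hy ⊢
                exact (hH'adj _ _).mpr ⟨hy, hvendY, hyY⟩
            have hDb'card : m + p ≤ (Db H' vend).card := by
              have h1 := Finset.card_le_card hsubDb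
              have h2 := Finset.card_union_le (Db H' vend) Y
              omega
            have hTp : p ≤ T.card := by omega
            obtain ⟨S0, hS0sub, hS0card⟩ := Finset.exists_subset_card_eq hTp
            have e := Finset.equivFinOfCardEq hS0card
            set s : Fin p → V := fun i => ((e.symm i : S0) : V) with hs
            have hsT : ∀ i, s i ∈ T := fun i => hS0sub (e.symm i).2
            have hsinj : Function.Injective s := by
              intro a b hab
              exact e.symm.injective (Subtype.coe_injective hab)
            have hsrange : ∀ i, s i ∈ Set.range f := fun i => (hTtrap _ (hsT i)).1
            have hsY : ∀ i, s i ∉ Y := by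
              intro i
              obtain ⟨j, hj⟩ := hsrange i
              rw [← hj]
              exact hrangeY j
            have hus : ∀ i, u ≠ s i := by
              intro i hcon
              exact (hsY i) (hcon ▸ huY)
            set PFin : Finset V := Finset.image f Finset.univ with hPFin
            have hPFcard : PFin.card = L := by
              rw [hPFin, Finset.card_image_of_injective _ hf.1, Finset.card_univ,
                Fintype.card_fin]
            have hPFmem : ∀ x : V, x ∈ PFin ↔ x ∈ Set.range f := by
              intro x
              rw [hPFin, Finset.mem_image]
              constructor
              · rintro ⟨j, -, hj⟩; exact ⟨j, hj⟩
              · rintro ⟨j, hj⟩; exact ⟨j, Finset.mem_univ _, hj⟩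
            -- key adjacency: trapped vertices are G-adjacent to everything off Y ∪ PFin
            have hkey : ∀ w ∈ T, ∀ x : V, x ∉ Y → x ∉ PFin → x ≠ w → G.Adj w x := by
              intro w hw x hxY hxP hxw
              obtain ⟨hwr, hwtrap⟩ := hTtrap w hw
              have hwY : w ∉ Y := by
                obtain ⟨j, hj⟩ := hwr
                rw [← hj]
                exact hrangeY j
              by_contra hcon
              have hGc : Gᶜ.Adj w x := by
                rw [SimpleGraph.compl_adj]
                exact ⟨fun h => hxw h.symm, hcon⟩
              have : x ∈ Set.range f := hwtrap x ((hH'adj _ _).mpr ⟨hGc, hwY, hxY⟩)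
              exact hxP ((hPFmem x).mpr this)
            have hcompair : ∀ w1 ∈ T, ∀ w2 ∈ T, 2*p+1 ≤ (Db G w1 ∩ Db G w2).card := by
              intro w1 hw1 w2 hw2
              have hsub : ((Y ∪ PFin) ∪ {w1, w2})ᶜ ⊆ Db G w1 ∩ Db G w2 := by
                intro x hx
                rw [Finset.mem_compl] at hx
                simp only [Finset.mem_union, Finset.mem_insert, Finset.mem_singleton,
                  not_or] at hx
                refine Finset.mem_inter.mpr ⟨?_, ?_⟩ <;> rw [mem_Db]
                · exact hkey _ hw1 x hx.1.1 hx.1.2 hx.2.1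
                · exact hkey _ hw2 x hx.1.1 hx.1.2 hx.2.2
              have h1 := Finset.card_le_card hsub
              have h2 : ((Y ∪ PFin) ∪ {w1, w2})ᶜ.card = N - ((Y ∪ PFin) ∪ {w1, w2}).card :=
                Finset.card_compl _
              have h3 : ((Y ∪ PFin) ∪ {w1, w2}).card ≤ p + 2*p + 2 := by
                have c1 := Finset.card_union_le (Y ∪ PFin) ({w1, w2} : Finset V)
                have c2 := Finset.card_union_le Y PFin
                have c3 := Finset.card_insert_le w1 ({w2} : Finset V)
                have c4 : ({w2} : Finset V).card = 1 := Finset.card_singleton _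
                omega
              have e3 : N + 1 = 2*(n+m+p) := hN
              have e4 : Y.card ≤ p := hYle
              have e5 : PFin.card = L := hPFcard
              have e6 : L ≤ 2*p := by omega
              omega
            have hcomhub : ∀ w1 ∈ T, p+2 ≤ (Db G u ∩ Db G w1).card := by
              intro w1 hw1
              have hsub : Db G u \ ((Y ∪ PFin) ∪ {w1}) ⊆ Db G u ∩ Db G w1 := by
                intro x hx
                rcases Finset.mem_sdiff.mp hx with ⟨hx1, hx2⟩
                simp only [Finset.mem_union, Finset.mem_singleton, not_or] at hx2
                refine Finset.mem_inter.mpr ⟨hx1, ?_⟩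
                rw [mem_Db]
                exact hkey _ hw1 x hx2.1.1 hx2.1.2 hx2.2
              have h1 := Finset.card_le_card hsub
              have h2 : (Db G u).card - ((Y ∪ PFin) ∪ {w1}).card ≤
                  (Db G u \ ((Y ∪ PFin) ∪ {w1})).card :=
                Finset.le_card_sdiff _ _
              have h3 : ((Y ∪ PFin) ∪ {w1}).card ≤ p + 2*p + 1 := by
                have c1 := Finset.card_union_le (Y ∪ PFin) ({w1} : Finset V)
                have c2 := Finset.card_union_le Y PFin
                have c3 : ({w1} : Finset V).card = 1 := Finset.card_singleton _
                omega
              have e3 : N + 1 = 2*(n+m+p) := hN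
              have e4 : Y.card ≤ p := hYle
              have e5 : PFin.card = L := hPFcard
              have e6 : L ≤ 2*p := by omega
              have e7 : n + m + 2*p ≤ (Db G u).card := hdu1
              omega
            obtain ⟨f2, hf2, hf20, hf2l⟩ := interleave (V := V) G p hp u s hsinj hus
              (hcomhub _ (hsT _))
              (fun i h => hcompair _ (hsT _) _ (hsT _))
            left
            refine assembly (V := V) G p n m f2 hf2 ?_ ?_
            · rw [hf20]
              omega
            · rw [hf2l]
              -- last support has small blue degree
              set w := s ⟨p-1, by omega⟩ with hw
              have hwT := hsT ⟨p-1, by omega⟩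
              obtain ⟨hwr, hwtrap⟩ := hTtrap _ hwT
              have hwY : w ∉ Y := hsY _
              have hsubw : Db Gᶜ w ⊆ Y ∪ PFin.erase w := by
                intro y hy
                rw [mem_Db] at hy
                by_cases hyY : y ∈ Y
                · exact Finset.mem_union_left _ hyY
                · refine Finset.mem_union_right _ ?_
                  rw [Finset.mem_erase]
                  refine ⟨hy.ne', ?_⟩
                  rw [hPFmem]
                  exact hwtrap y ((hH'adj _ _).mpr ⟨hy, hwY, hyY⟩)
              have h1 := Finset.card_le_card hsubw
              have h2 := Finset.card_union_le Y (PFin.erase w)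
              have h3 : (PFin.erase w).card = L - 1 := by
                rw [Finset.card_erase_of_mem ((hPFmem w).mpr hwr), hPFcard]
              have h4 := hsum w
              omega
end
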